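/- arXiv:2109.07956 — 9 statements merged into one kernel-verified Lean document; each statement's English description precedes it below -/
import Mathlib

section
/- Let T ≥ 2 be an integer, ξ_1,…,ξ_T > 0 real numbers, and ρ ∈ [0,1). Then the sequence (v_1, …, v_T) is nonincreasing: v_t ≥ v_{t+1} for t = 1,…,T−1. Moreover, if ρ ∈ (0,1) then all these inequalities are strict: v_1 > v_2 > … > v_T > 0. -/
/-- the sequence `(v_1, …, v_T)` is nonincreasing for `ρ ∈ [0,1)`;
moreover, if `ρ ∈ (0,1)` then `v_1 > v_2 > … > v_T > 0`. -/
theorem stmt4 (T : ℕ) (hT : 2 ≤ T) (ρ : ℝ) (hρ1 : 0 ≤ ρ) (hρ2 : ρ < 1)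
    (ξ d v : ℕ → ℝ)
    (hξ : ∀ t, 1 ≤ t → t ≤ T → 0 < ξ t)
    (hdT : d T = 1 + ξ T)
    (hd : ∀ t, 2 ≤ t → t ≤ T - 1 → d t = 1 + ρ ^ 2 + ξ t - ρ ^ 2 / d (t + 1))
    (hd1 : d 1 = 1 + ξ 1 - ρ ^ 2 / d 2)
    (hv1 : v 1 = 1 / d 1)
    (hv : ∀ t, 2 ≤ t → t ≤ T → v t = (ρ / d t) * v (t - 1)) :
    (∀ t, 1 ≤ t → t ≤ T - 1 → v (t + 1) ≤ v t) ∧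
    (0 < ρ → (∀ t, 1 ≤ t → t ≤ T - 1 → v (t + 1) < v t) ∧ 0 < v T) := by
  -- d t > 1 for 2 ≤ t ≤ T, by downward induction
  have hD : ∀ n t, 2 ≤ t → t ≤ T → T - t ≤ n → 1 < d t := by
    intro n
    induction n with
    | zero =>
      intro t h2 hle h0
      have : t = T := by omega
      subst this
      have := hξ t (by omega) le_rfl
      rw [hdT]; linarith
    | succ n ih =>
      intro t h2 hle hn
      by_cases hEq : t = T
      · subst hEq
        have := hξ t (by omega) le_rfl
        rw [hdT]; linarith
      · have ht1 : t ≤ T - 1 := by omega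
        have hd' := hd t h2 ht1
        have hdt1 : 1 < d (t + 1) := ih (t + 1) (by omega) (by omega) (by omega)
        have hdiv : ρ ^ 2 / d (t + 1) ≤ ρ ^ 2 :=
          div_le_self (sq_nonneg ρ) (le_of_lt hdt1)
        have := hξ t (by omega) hle
        rw [hd']; linarith
  have hDall : ∀ t, 2 ≤ t → t ≤ T → 1 < d t := fun t h2 hle => hD (T - t) t h2 hle le_rfl
  -- d 1 > 0
  have hd2 : 1 < d 2 := hDall 2 le_rfl hT
  have hρsq : ρ ^ 2 < 1 := by nlinarith
  have hdiv1 : ρ ^ 2 / d 2 ≤ ρ ^ 2 := div_le_self (sq_nonneg ρ) (le_of_lt hd2)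
  have hξ1 := hξ 1 le_rfl (by omega)
  have hd1pos : 0 < d 1 := by rw [hd1]; linarith
  have hv1pos : 0 < v 1 := by rw [hv1]; positivity
  -- v t ≥ 0 for 1 ≤ t ≤ T
  have hvnn : ∀ t, 1 ≤ t → t ≤ T → 0 ≤ v t := by
    intro t
    induction t with
    | zero => omega
    | succ t ih =>
      intro h1 hle
      by_cases ht : t = 0
      · subst ht; exact le_of_lt hv1pos
      · have h2 : 2 ≤ t + 1 := by omega
        rw [hv (t + 1) h2 hle]
        simp only [Nat.add_sub_cancel]
        have hdt : 1 < d (t + 1) := hDall (t + 1) h2 hle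
        have hvt : 0 ≤ v t := ih (by omega) (by omega)
        have : 0 ≤ ρ / d (t + 1) := div_nonneg hρ1 (by linarith)
        exact mul_nonneg this hvt
  -- v t > 0 for 1 ≤ t ≤ T when 0 < ρ
  have hvpos : 0 < ρ → ∀ t, 1 ≤ t → t ≤ T → 0 < v t := by
    intro hρ t
    induction t with
    | zero => omega
    | succ t ih =>
      intro h1 hle
      by_cases ht : t = 0
      · subst ht; exact hv1pos
      · have h2 : 2 ≤ t + 1 := by omega
        rw [hv (t + 1) h2 hle]
        simp only [Nat.add_sub_cancel]
        have hdt : 1 < d (t + 1) := hDall (t + 1) h2 hle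
        have hvt : 0 < v t := ih (by omega) (by omega)
        have : 0 < ρ / d (t + 1) := div_pos hρ (by linarith)
        exact mul_pos this hvt
  constructor
  · intro t h1 hle
    have h2 : 2 ≤ t + 1 := by omega
    have hle' : t + 1 ≤ T := by omega
    rw [hv (t + 1) h2 hle']
    simp only [Nat.add_sub_cancel]
    have hdt : 1 < d (t + 1) := hDall (t + 1) h2 hle'
    have hvt : 0 ≤ v t := hvnn t h1 (by omega)
    have hq : ρ / d (t + 1) < 1 := (div_lt_one (by linarith)).mpr (by linarith)
    nlinarith
  · intro hρ
    refine ⟨fun t h1 hle => ?_, hvpos hρ T (by omega) le_rfl⟩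
    have h2 : 2 ≤ t + 1 := by omega
    have hle' : t + 1 ≤ T := by omega
    rw [hv (t + 1) h2 hle']
    simp only [Nat.add_sub_cancel]
    have hdt : 1 < d (t + 1) := hDall (t + 1) h2 hle'
    have hvt : 0 < v t := hvpos hρ t h1 (by omega)
    have hq : ρ / d (t + 1) < 1 := (div_lt_one (by linarith)).mpr (by linarith)
    nlinarith
end

section
/- Let T ≥ 2 be an integer, ξ_1,…,ξ_T > 0 real numbers, and ρ ∈ (0,1). Then the sequence (u_1, …, u_T) is strictly increasing and positive: 0 < u_1 < u_2 < … < u_T. -/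
/-- for `ρ ∈ (0,1)`, the sequence `(u_1, …, u_T)` is strictly
increasing and positive: `0 < u_1 < u_2 < … < u_T`. -/
theorem stmt5 (T : ℕ) (hT : 2 ≤ T) (ρ : ℝ) (hρ1 : 0 < ρ) (hρ2 : ρ < 1)
    (ξ d v δ u : ℕ → ℝ)
    (hξ : ∀ t, 1 ≤ t → t ≤ T → 0 < ξ t)
    (hdT : d T = 1 + ξ T)
    (hd : ∀ t, 2 ≤ t → t ≤ T - 1 → d t = 1 + ρ ^ 2 + ξ t - ρ ^ 2 / d (t + 1))
    (hd1 : d 1 = 1 + ξ 1 - ρ ^ 2 / d 2)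
    (hv1 : v 1 = 1 / d 1)
    (hv : ∀ t, 2 ≤ t → t ≤ T → v t = (ρ / d t) * v (t - 1))
    (hδ1 : δ 1 = 1 + ξ 1)
    (hδ : ∀ t, 2 ≤ t → t ≤ T - 1 → δ t = 1 + ρ ^ 2 + ξ t - ρ ^ 2 / δ (t - 1))
    (hδT : δ T = 1 + ξ T - ρ ^ 2 / δ (T - 1))
    (huT : u T = 1 / (δ T * v T))
    (hu : ∀ t, 1 ≤ t → t ≤ T - 1 → u t = (ρ / δ t) * u (t + 1)) :
    0 < u 1 ∧ (∀ t, 1 ≤ t → t ≤ T - 1 → u t < u (t + 1)) := by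
  have hρsq : (0:ℝ) < ρ ^ 2 := by positivity
  have hρsq1 : ρ ^ 2 < 1 := by nlinarith
  -- d t > 1 for 2 ≤ t ≤ T, by downward induction
  have hdgt : ∀ k t, 2 ≤ t → t ≤ T → T - t ≤ k → 1 < d t := by
    intro k
    induction k with
    | zero =>
      intro t h2 hle hk
      have ht : t = T := by omega
      have := hξ T (by omega) le_rfl
      rw [ht, hdT]; linarith
    | succ k ih =>
      intro t h2 hle hk
      by_cases hEq : t = T
      · have := hξ T (by omega) le_rfl
        rw [hEq, hdT]; linarith
      · have hnext : 1 < d (t + 1) := ih (t + 1) (by omega) (by omega) (by omega)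
        have hξt := hξ t (by omega) (by omega)
        rw [hd t h2 (by omega)]
        have : ρ ^ 2 / d (t + 1) < ρ ^ 2 := div_lt_self hρsq hnext
        linarith
  have hd2 : 1 < d 2 := hdgt T 2 le_rfl hT (by omega)
  have hd1pos : 0 < d 1 := by
    rw [hd1]
    have hξ1 := hξ 1 (by omega) (by omega)
    have : ρ ^ 2 / d 2 < ρ ^ 2 := div_lt_self hρsq hd2
    linarith
  -- v t > 0 for 1 ≤ t ≤ T
  have hvpos : ∀ t, 1 ≤ t → t ≤ T → 0 < v t := by
    intro t
    induction t with
    | zero => omega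
    | succ n ih =>
      intro h1 hle
      by_cases hn : n = 0
      · subst hn; rw [hv1]; positivity
      · have h2 : 2 ≤ n + 1 := by omega
        have hvn : 0 < v n := ih (by omega) (by omega)
        have hdn : 1 < d (n + 1) := hdgt T (n + 1) h2 hle (by omega)
        have hrw := hv (n + 1) h2 hle
        simp only [Nat.add_sub_cancel] at hrw
        rw [hrw]
        exact mul_pos (div_pos hρ1 (by linarith)) hvn
  -- δ t > 1 for 1 ≤ t ≤ T - 1
  have hδgt : ∀ t, 1 ≤ t → t ≤ T - 1 → 1 < δ t := by
    intro t
    induction t with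
    | zero => omega
    | succ n ih =>
      intro h1 hle
      by_cases hn : n = 0
      · subst hn; rw [hδ1]; have := hξ 1 (by omega) (by omega); linarith
      · have h2 : 2 ≤ n + 1 := by omega
        have hprev : 1 < δ n := ih (by omega) (by omega)
        have hξt := hξ (n + 1) (by omega) (by omega)
        have hrw := hδ (n + 1) h2 hle
        simp only [Nat.add_sub_cancel] at hrw
        rw [hrw]
        have : ρ ^ 2 / δ n < ρ ^ 2 := div_lt_self hρsq hprev
        linarith
  have hδTpos : 0 < δ T := by
    rw [hδT]
    have hprev : 1 < δ (T - 1) := hδgt (T - 1) (by omega) le_rfl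
    have hξT := hξ T (by omega) le_rfl
    have : ρ ^ 2 / δ (T - 1) < ρ ^ 2 := div_lt_self hρsq hprev
    linarith
  have hvT : 0 < v T := hvpos T (by omega) le_rfl
  have huTpos : 0 < u T := by
    rw [huT]
    exact one_div_pos.mpr (mul_pos hδTpos hvT)
  -- u t > 0 for 1 ≤ t ≤ T, by downward induction
  have hupos : ∀ k t, 1 ≤ t → t ≤ T → T - t ≤ k → 0 < u t := by
    intro k
    induction k with
    | zero =>
      intro t h1 hle hk
      have ht : t = T := by omega
      rw [ht]; exact huTpos
    | succ k ih =>
      intro t h1 hle hk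
      by_cases hEq : t = T
      · rw [hEq]; exact huTpos
      · have hnext : 0 < u (t + 1) := ih (t + 1) (by omega) (by omega) (by omega)
        have hδt : 1 < δ t := hδgt t h1 (by omega)
        rw [hu t h1 (by omega)]
        exact mul_pos (div_pos hρ1 (by linarith)) hnext
  refine ⟨hupos T 1 le_rfl (by omega) (by omega), ?_⟩
  intro t h1 hle
  have hnext : 0 < u (t + 1) := hupos T (t + 1) (by omega) (by omega) (by omega)
  have hδt : 1 < δ t := hδgt t h1 hle
  rw [hu t h1 hle]
  have hfrac : ρ / δ t < 1 := (div_lt_one (by linarith)).mpr (by linarith)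
  nlinarith
end

section
/- Let T ≥ 2 be an integer, ρ ∈ (−1,1), σ > 0, and let λ_1,…,λ_T > 0 and q_1,…,q_T > 0 be real numbers. Set ξ_t = σ²(1−ρ²)λ_t²/q_t for t = 1,…,T, and let Λ = diag(λ_1,…,λ_T) and Q = diag(q_1,…,q_T). Then the matrix Σ*_T (built from these ξ_t and ρ) is invertible, the matrix I_T + (1/σ²)·Q·Λ^{−1}·(Σ_{T,ρ})^{−1}·Λ^{−1} is invertible, and its inverse equals σ²(1−ρ²)·Λ·(Σ*_T)^{−1}·Λ·Q^{−1}. -/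
open Matrix

/-- The T×T AR(1) correlation (Toeplitz) matrix with entries `ρ^{|i-j|}`. -/
noncomputable def sigmaMat (T : ℕ) (ρ : ℝ) : Matrix (Fin T) (Fin T) ℝ :=
  Matrix.of fun i j => ρ ^ (Int.natAbs ((i : ℤ) - (j : ℤ)))

/-- The tridiagonal matrix `Σ*_T` built from `ρ` and a one-based sequence `ξ`. -/
noncomputable def sigmaStar (T : ℕ) (ρ : ℝ) (ξ : ℕ → ℝ) : Matrix (Fin T) (Fin T) ℝ :=
  Matrix.of fun i j =>
    if i = j then
      (if (i : ℕ) = 0 ∨ (i : ℕ) = T - 1 then 1 + ξ ((i : ℕ) + 1)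
       else 1 + ρ ^ 2 + ξ ((i : ℕ) + 1))
    else if Int.natAbs ((i : ℤ) - (j : ℤ)) = 1 then -ρ else 0

/-! The AR(1) correlation matrix has the tridiagonal inverse `Σ_{T,ρ}⁻¹ = (1 - ρ²)⁻¹ Σ*_T(0)`,
and `Σ*_T(ξ) = Σ*_T(0) + diag ξ`. With `c = σ²(1 - ρ²)`, the choice `ξ = c Λ² Q⁻¹` gives
`Q Λ⁻¹ diag ξ Λ⁻¹ = c`, so `I + σ⁻² Q Λ⁻¹ Σ_{T,ρ}⁻¹ Λ⁻¹ = c⁻¹ Q Λ⁻¹ Σ*_T Λ⁻¹`, a product of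
invertible matrices whose inverse can be read off. For `|ρ| < 1` and `ξ ≥ 0` the matrix `Σ*_T` is
strictly diagonally dominant (`2|ρ| < 1 + ρ²` in the interior rows), hence invertible. -/

open Finset

theorem Fin.sum_univ_ite_val_eq {M : Type*} [AddCommMonoid M] {T : ℕ} (n : ℕ) (g : Fin T → M) :
    ∑ k : Fin T, (if (k : ℕ) = n then g k else 0) = if h : n < T then g ⟨n, h⟩ else 0 := by
  split_ifs with h
  · simp_rw [← Fin.ext_iff (b := ⟨n, h⟩), sum_ite_eq', mem_univ, if_true]
  · exact sum_eq_zero fun k _ => if_neg (by omega)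

theorem Fin.sum_univ_ite_val_add_one_eq {M : Type*} [AddCommMonoid M] {T n : ℕ} (hn : n ≤ T)
    (g : Fin T → M) :
    ∑ k : Fin T, (if (k : ℕ) + 1 = n then g k else 0) =
      if h : 0 < n then g ⟨n - 1, by omega⟩ else 0 := by
  cases n with
  | zero => simp
  | succ n =>
    simp only [Nat.add_right_cancel_iff, Fin.sum_univ_ite_val_eq, dif_pos (show n < T by omega)]
    simp

theorem sigmaStar_eq_add_diagonal (T : ℕ) (ρ : ℝ) (ξ : ℕ → ℝ) :
    sigmaStar T ρ ξ = sigmaStar T ρ 0 + diagonal fun i : Fin T => ξ (i + 1) := by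
  ext i j
  by_cases h : i = j
  · subst h; simp only [sigmaStar, of_apply, Matrix.add_apply, diagonal_apply_eq, if_true]
    split_ifs <;> simp
  · simp [sigmaStar, h]

theorem sigmaStar_zero_apply (T : ℕ) (ρ : ℝ) (k j : Fin T) :
    sigmaStar T ρ 0 k j =
      (if (k : ℕ) = j then (if (j : ℕ) = 0 ∨ (j : ℕ) = T - 1 then 1 else 1 + ρ ^ 2) else 0)
        - (if (k : ℕ) = j + 1 then ρ else 0) - (if (k : ℕ) + 1 = j then ρ else 0) := by
  simp only [sigmaStar, of_apply, Fin.ext_iff, Pi.zero_apply, add_zero]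
  split_ifs <;> first | omega | ring

theorem pow_natAbs_sub_mul_pow_natAbs_sub_one (ρ : ℝ) {d : ℤ} (hd : 0 ≤ d) :
    ρ ^ d.natAbs - ρ * ρ ^ (d - 1).natAbs = if d = 0 then 1 - ρ ^ 2 else 0 := by
  obtain rfl | hd := hd.eq_or_lt
  · norm_num [sq]
  · rw [if_neg hd.ne', show d.natAbs = (d - 1).natAbs + 1 by omega, pow_succ]; ring

theorem pow_natAbs_sub_mul_pow_natAbs_add_one (ρ : ℝ) {d : ℤ} (hd : d ≤ 0) :
    ρ ^ d.natAbs - ρ * ρ ^ (d + 1).natAbs = if d = 0 then 1 - ρ ^ 2 else 0 := by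
  have := pow_natAbs_sub_mul_pow_natAbs_sub_one ρ (neg_nonneg.2 hd)
  rw [Int.natAbs_neg, show -d - 1 = -(d + 1) by ring, Int.natAbs_neg] at this
  simpa only [neg_eq_zero] using this

theorem pow_natAbs_second_difference (ρ : ℝ) (d : ℤ) :
    (1 + ρ ^ 2) * ρ ^ d.natAbs - ρ * ρ ^ (d - 1).natAbs - ρ * ρ ^ (d + 1).natAbs =
      if d = 0 then 1 - ρ ^ 2 else 0 := by
  rcases lt_trichotomy d 0 with hd | rfl | hd
  · rw [if_neg hd.ne, show (d - 1).natAbs = (d + 1).natAbs + 2 by omega,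
      show d.natAbs = (d + 1).natAbs + 1 by omega]; ring
  · norm_num [sq]
  · rw [if_neg hd.ne', show (d + 1).natAbs = (d - 1).natAbs + 2 by omega,
      show d.natAbs = (d - 1).natAbs + 1 by omega]; ring

theorem sigmaMat_mul_sigmaStar_zero {T : ℕ} (hT : 2 ≤ T) (ρ : ℝ) :
    sigmaMat T ρ * sigmaStar T ρ 0 = (1 - ρ ^ 2) • (1 : Matrix (Fin T) (Fin T) ℝ) := by
  ext i j
  have hj := j.isLt
  set d : ℤ := (i : ℤ) - j with hd
  have hij : i = j ↔ d = 0 := by rw [Fin.ext_iff]; omega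
  simp only [mul_apply, sigmaMat, of_apply, sigmaStar_zero_apply, mul_sub, mul_ite, mul_zero,
    sum_sub_distrib, Fin.sum_univ_ite_val_eq, Fin.sum_univ_ite_val_add_one_eq hj.le, dif_pos hj,
    Matrix.smul_apply, one_apply, hij, smul_eq_mul, mul_one, ← hd]
  rw [show ((i : ℕ) : ℤ) - ((j + 1 : ℕ) : ℤ) = d - 1 by omega]
  rcases Nat.eq_zero_or_pos j with hj0 | hj0
  · rw [if_pos (Or.inl hj0), dif_pos (by omega), dif_neg (by omega),
      ← pow_natAbs_sub_mul_pow_natAbs_sub_one ρ (by omega : 0 ≤ d)]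
    ring
  rw [show ((i : ℕ) : ℤ) - ((j - 1 : ℕ) : ℤ) = d + 1 by omega, dif_pos hj0]
  by_cases hjT : (j : ℕ) = T - 1
  · rw [if_pos (Or.inr hjT), dif_neg (by omega),
      ← pow_natAbs_sub_mul_pow_natAbs_add_one ρ (by omega : d ≤ 0)]
    ring
  · rw [if_neg (by omega), dif_pos (by omega), ← pow_natAbs_second_difference]
    ring

theorem inv_sigmaMat {T : ℕ} (hT : 2 ≤ T) {ρ : ℝ} (hρ : 1 - ρ ^ 2 ≠ 0) :
    (sigmaMat T ρ)⁻¹ = (1 - ρ ^ 2)⁻¹ • sigmaStar T ρ 0 :=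
  inv_eq_right_inv <| by
    rw [Matrix.mul_smul, sigmaMat_mul_sigmaStar_zero hT, smul_smul, inv_mul_cancel₀ hρ, one_smul]

theorem isUnit_sigmaStar {T : ℕ} {ρ : ℝ} (hρ : |ρ| < 1) {ξ : ℕ → ℝ}
    (hξ : ∀ i : Fin T, 0 ≤ ξ (i + 1)) : IsUnit (sigmaStar T ρ ξ) := by
  rw [isUnit_iff_isUnit_det, isUnit_iff_ne_zero]
  refine det_ne_zero_of_sum_row_lt_diag fun k => ?_
  have hk := k.isLt
  have hoff : ∀ j ∈ univ.erase k, ‖sigmaStar T ρ ξ k j‖ =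
      (if (j : ℕ) = k + 1 then |ρ| else 0) + (if (j : ℕ) + 1 = k then |ρ| else 0) := by
    intro j hj
    have hjk : (k : ℕ) ≠ j := Fin.val_ne_of_ne (ne_of_mem_erase hj).symm
    simp only [sigmaStar, of_apply, if_neg (ne_of_mem_erase hj).symm, Real.norm_eq_abs]
    split_ifs <;> first | omega | simp
  rw [sum_congr rfl hoff, sum_erase _ (by simp), sum_add_distrib, Fin.sum_univ_ite_val_eq,
    Fin.sum_univ_ite_val_add_one_eq hk.le]
  simp only [sigmaStar, of_apply, if_true, Real.norm_eq_abs]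
  have h2 : 2 * |ρ| < 1 + ρ ^ 2 := by nlinarith [sq_abs ρ]
  refine lt_of_lt_of_le ?_ (le_abs_self _)
  have := hξ k
  split_ifs <;> first | omega | linarith [abs_nonneg ρ]

section
variable {n K : Type*} [Fintype n] [DecidableEq n] [Field K]

theorem inv_diagonal_of_ne_zero {v : n → K} (hv : ∀ i, v i ≠ 0) :
    (diagonal v)⁻¹ = diagonal fun i => (v i)⁻¹ :=
  inv_eq_right_inv <| by
    rw [diagonal_mul_diagonal, ← diagonal_one]
    exact congrArg diagonal (funext fun i => mul_inv_cancel₀ (hv i))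

theorem isUnit_det_diagonal {v : n → K} (hv : ∀ i, v i ≠ 0) : IsUnit (diagonal v).det := by
  simp [det_diagonal, prod_ne_zero_iff, hv]

theorem one_add_smul_diagonal_conj_mul_eq_one (S : Matrix n n K) {l q : n → K}
    (hl : ∀ i, l i ≠ 0) (hq : ∀ i, q i ≠ 0) {c : K} (hc : c ≠ 0)
    (hA : IsUnit (S + diagonal fun i => c * l i ^ 2 / q i)) :
    (1 + c⁻¹ • (diagonal q * (diagonal l)⁻¹ * S * (diagonal l)⁻¹)) *
      (c • (diagonal l * (S + diagonal fun i => c * l i ^ 2 / q i)⁻¹ * diagonal l *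
        (diagonal q)⁻¹)) = 1 := by
  set A := S + diagonal fun i => c * l i ^ 2 / q i
  have hD : diagonal q * (diagonal l)⁻¹ * (diagonal fun i => c * l i ^ 2 / q i) *
      (diagonal l)⁻¹ = c • 1 := by
    rw [inv_diagonal_of_ne_zero hl, diagonal_mul_diagonal, diagonal_mul_diagonal,
      diagonal_mul_diagonal, ← diagonal_one, ← diagonal_smul]
    refine congrArg diagonal (funext fun i => ?_)
    simp only [Pi.smul_apply, smul_eq_mul, mul_one]
    field_simp [hl i, hq i]
  have hM : 1 + c⁻¹ • (diagonal q * (diagonal l)⁻¹ * S * (diagonal l)⁻¹) =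
      c⁻¹ • (diagonal q * (diagonal l)⁻¹ * A * (diagonal l)⁻¹) := by
    rw [Matrix.mul_add, Matrix.add_mul, hD, smul_add, smul_smul, inv_mul_cancel₀ hc, one_smul,
      add_comm]
  rw [hM, smul_mul_smul_comm, inv_mul_cancel₀ hc, one_smul]
  simp only [Matrix.mul_assoc, nonsing_inv_mul_cancel_left _ _ (isUnit_det_diagonal hl),
    mul_nonsing_inv_cancel_left _ _ ((isUnit_iff_isUnit_det A).1 hA),
    mul_nonsing_inv _ (isUnit_det_diagonal hq)]

end

/-- with `ξ_t = σ²(1−ρ²)λ_t²/q_t`, `Λ = diag(λ_1,…,λ_T)` and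
`Q = diag(q_1,…,q_T)`, the matrix `Σ*_T` is invertible, the matrix
`I_T + (1/σ²)·Q·Λ⁻¹·(Σ_{T,ρ})⁻¹·Λ⁻¹` is invertible, and its inverse equals
`σ²(1−ρ²)·Λ·(Σ*_T)⁻¹·Λ·Q⁻¹`. -/
theorem stmt7 (T : ℕ) (hT : 2 ≤ T) (ρ : ℝ) (hρ1 : -1 < ρ) (hρ2 : ρ < 1)
    (σ : ℝ) (hσ : 0 < σ) (lam q : ℕ → ℝ)
    (hlam : ∀ t, 1 ≤ t → t ≤ T → 0 < lam t)
    (hq : ∀ t, 1 ≤ t → t ≤ T → 0 < q t) :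
    IsUnit (sigmaStar T ρ (fun t => σ ^ 2 * (1 - ρ ^ 2) * (lam t) ^ 2 / q t)) ∧
    IsUnit ((1 : Matrix (Fin T) (Fin T) ℝ) +
      (1 / σ ^ 2) • (Matrix.diagonal (fun i : Fin T => q ((i : ℕ) + 1)) *
        (Matrix.diagonal (fun i : Fin T => lam ((i : ℕ) + 1)))⁻¹ *
        (sigmaMat T ρ)⁻¹ *
        (Matrix.diagonal (fun i : Fin T => lam ((i : ℕ) + 1)))⁻¹)) ∧
    ((1 : Matrix (Fin T) (Fin T) ℝ) +
      (1 / σ ^ 2) • (Matrix.diagonal (fun i : Fin T => q ((i : ℕ) + 1)) *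
        (Matrix.diagonal (fun i : Fin T => lam ((i : ℕ) + 1)))⁻¹ *
        (sigmaMat T ρ)⁻¹ *
        (Matrix.diagonal (fun i : Fin T => lam ((i : ℕ) + 1)))⁻¹))⁻¹ =
      (σ ^ 2 * (1 - ρ ^ 2)) •
        (Matrix.diagonal (fun i : Fin T => lam ((i : ℕ) + 1)) *
          (sigmaStar T ρ (fun t => σ ^ 2 * (1 - ρ ^ 2) * (lam t) ^ 2 / q t))⁻¹ *
          Matrix.diagonal (fun i : Fin T => lam ((i : ℕ) + 1)) *
          (Matrix.diagonal (fun i : Fin T => q ((i : ℕ) + 1)))⁻¹) := by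
  have hρ : |ρ| < 1 := abs_lt.2 ⟨hρ1, hρ2⟩
  have hρ' : 0 < 1 - ρ ^ 2 := by nlinarith
  have hl : ∀ i : Fin T, lam (i + 1) ≠ 0 := fun i => (hlam _ (by omega) (by omega)).ne'
  have hq' : ∀ i : Fin T, 0 < q (i + 1) := fun i => hq _ (by omega) (by omega)
  have hunit : IsUnit (sigmaStar T ρ fun t => σ ^ 2 * (1 - ρ ^ 2) * lam t ^ 2 / q t) :=
    isUnit_sigmaStar hρ fun i => by have := hq' i; positivity
  set Λ : Matrix (Fin T) (Fin T) ℝ := diagonal fun i => lam (i + 1)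
  set Q : Matrix (Fin T) (Fin T) ℝ := diagonal fun i => q (i + 1)
  have hscale : (1 / σ ^ 2) • (Q * Λ⁻¹ * (sigmaMat T ρ)⁻¹ * Λ⁻¹) =
      (σ ^ 2 * (1 - ρ ^ 2))⁻¹ • (Q * Λ⁻¹ * sigmaStar T ρ 0 * Λ⁻¹) := by
    rw [inv_sigmaMat hT hρ'.ne', Matrix.mul_smul, Matrix.smul_mul, smul_smul, mul_inv, one_div]
  have hMN := one_add_smul_diagonal_conj_mul_eq_one (sigmaStar T ρ 0) hl (fun i => (hq' i).ne')
    (c := σ ^ 2 * (1 - ρ ^ 2)) (by positivity) (by rwa [sigmaStar_eq_add_diagonal] at hunit)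
  rw [← sigmaStar_eq_add_diagonal T ρ fun t => σ ^ 2 * (1 - ρ ^ 2) * lam t ^ 2 / q t,
    ← hscale] at hMN
  exact ⟨hunit, IsUnit.of_mul_eq_one _ hMN, inv_eq_right_inv hMN⟩
end

section
/- Let T ≥ 2 be an integer, ξ_1,…,ξ_T > 0 real numbers, and ρ ∈ (−1,1) with ρ ≠ 0. Then Σ*_T is invertible and (Σ*_T)^{−1}·e_T = v_T·(u_1, u_2, …, u_T)ᵀ, where e_T = (0,…,0,1)ᵀ is the last standard basis vector of ℝ^T; equivalently, Σ*_T · (v_T·u_1, …, v_T·u_T)ᵀ = e_T. -/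
open Matrix

lemma sum_if_eq {T : ℕ} (k : ℕ) (f : Fin T → ℝ) :
    (∑ j : Fin T, if (j : ℕ) = k then f j else 0) = if h : k < T then f ⟨k, h⟩ else 0 := by
  split_ifs with h
  · rw [Finset.sum_eq_single (⟨k, h⟩ : Fin T)]
    · simp
    · intro b _ hb; rw [if_neg]; intro hbk; exact hb (Fin.ext hbk)
    · simp
  · apply Finset.sum_eq_zero
    intro j _; rw [if_neg]; intro hj; exact h (hj ▸ j.2)

lemma sum_if_succ {T : ℕ} (k : ℕ) (f : Fin T → ℝ) :
    (∑ j : Fin T, if (j : ℕ) + 1 = k then f j else 0) =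
      if h : k - 1 < T ∧ 1 ≤ k then f ⟨k - 1, h.1⟩ else 0 := by
  split_ifs with h
  · rw [Finset.sum_eq_single (⟨k - 1, h.1⟩ : Fin T)]
    · simp; omega
    · intro b _ hb; rw [if_neg]; intro hbk; apply hb; apply Fin.ext; simp; omega
    · simp
  · apply Finset.sum_eq_zero
    intro j _; rw [if_neg]; intro hj; exact h ⟨by omega, by omega⟩

lemma sigmaStar_split (T : ℕ) (ρ : ℝ) (ξ : ℕ → ℝ) (x : Fin T → ℝ) (i j : Fin T) :
    sigmaStar T ρ ξ i j * x j =
      (if (j : ℕ) = (i : ℕ) then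
        (if (i : ℕ) = 0 ∨ (i : ℕ) = T - 1 then 1 + ξ ((i : ℕ) + 1)
         else 1 + ρ ^ 2 + ξ ((i : ℕ) + 1)) * x j else 0)
      + (if (j : ℕ) = (i : ℕ) + 1 then -ρ * x j else 0)
      + (if (j : ℕ) + 1 = (i : ℕ) then -ρ * x j else 0) := by
  simp only [sigmaStar, Matrix.of_apply]
  by_cases h1 : i = j
  · subst h1; simp
  · have h1' : ¬ ((j : ℕ) = (i : ℕ)) := fun h => h1 (Fin.ext h.symm)
    rw [if_neg h1, if_neg h1']
    by_cases h2 : (j : ℕ) = (i : ℕ) + 1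
    · rw [if_pos (by omega : Int.natAbs ((i : ℤ) - (j : ℤ)) = 1), if_pos h2, if_neg (by omega)]
      ring
    · by_cases h3 : (j : ℕ) + 1 = (i : ℕ)
      · rw [if_pos (by omega : Int.natAbs ((i : ℤ) - (j : ℤ)) = 1), if_neg h2, if_pos h3]
        ring
      · rw [if_neg (by omega : ¬ Int.natAbs ((i : ℤ) - (j : ℤ)) = 1), if_neg h2, if_neg h3]
        ring

lemma tri_row (T : ℕ) (ρ : ℝ) (ξ : ℕ → ℝ) (x : Fin T → ℝ) (i : Fin T) :
    (sigmaStar T ρ ξ).mulVec x i =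
      (if (i : ℕ) = 0 ∨ (i : ℕ) = T - 1 then 1 + ξ ((i : ℕ) + 1)
       else 1 + ρ ^ 2 + ξ ((i : ℕ) + 1)) * x i
      + (if h : (i : ℕ) + 1 < T then -ρ * x ⟨(i : ℕ) + 1, h⟩ else 0)
      + (if h : (i : ℕ) - 1 < T ∧ 1 ≤ (i : ℕ) then -ρ * x ⟨(i : ℕ) - 1, h.1⟩ else 0) := by
  rw [Matrix.mulVec, dotProduct]
  rw [Finset.sum_congr rfl (fun j _ => sigmaStar_split T ρ ξ x i j),
    Finset.sum_add_distrib, Finset.sum_add_distrib, sum_if_eq, sum_if_eq,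
    sum_if_succ]
  rw [dif_pos i.2]

/-- `Σ*_T` is invertible and `(Σ*_T)⁻¹ e_T = v_T·(u_1, …, u_T)ᵀ`
where `e_T = (0,…,0,1)ᵀ`; equivalently `Σ*_T (v_T u_1, …, v_T u_T)ᵀ = e_T`. -/
theorem stmt8 (T : ℕ) (hT : 2 ≤ T) (ρ : ℝ) (hρ1 : -1 < ρ) (hρ2 : ρ < 1)
    (hρ0 : ρ ≠ 0) (ξ d v δ u : ℕ → ℝ)
    (hξ : ∀ t, 1 ≤ t → t ≤ T → 0 < ξ t)
    (hdT : d T = 1 + ξ T)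
    (hd : ∀ t, 2 ≤ t → t ≤ T - 1 → d t = 1 + ρ ^ 2 + ξ t - ρ ^ 2 / d (t + 1))
    (hd1 : d 1 = 1 + ξ 1 - ρ ^ 2 / d 2)
    (hv1 : v 1 = 1 / d 1)
    (hv : ∀ t, 2 ≤ t → t ≤ T → v t = (ρ / d t) * v (t - 1))
    (hδ1 : δ 1 = 1 + ξ 1)
    (hδ : ∀ t, 2 ≤ t → t ≤ T - 1 → δ t = 1 + ρ ^ 2 + ξ t - ρ ^ 2 / δ (t - 1))
    (hδT : δ T = 1 + ξ T - ρ ^ 2 / δ (T - 1))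
    (huT : u T = 1 / (δ T * v T))
    (hu : ∀ t, 1 ≤ t → t ≤ T - 1 → u t = (ρ / δ t) * u (t + 1)) :
    IsUnit (sigmaStar T ρ ξ) ∧
    (sigmaStar T ρ ξ)⁻¹.mulVec
        (fun i : Fin T => if (i : ℕ) = T - 1 then (1 : ℝ) else 0) =
      (fun i : Fin T => v T * u ((i : ℕ) + 1)) ∧
    (sigmaStar T ρ ξ).mulVec (fun i : Fin T => v T * u ((i : ℕ) + 1)) =
      (fun i : Fin T => if (i : ℕ) = T - 1 then (1 : ℝ) else 0) := by
  have hρsq : ρ ^ 2 < 1 := by nlinarith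
  have hρsq0 : 0 < ρ ^ 2 := by positivity
  -- d is positive
  have hdpos2 : ∀ t, 2 ≤ t → t ≤ T → 1 < d t := by
    have key : ∀ m t, 2 ≤ t → t + m = T → 1 < d t := by
      intro m
      induction m with
      | zero =>
        intro t h2 hEq
        have hEq' : t = T := by omega
        rw [hEq', hdT]
        have := hξ T (by omega) le_rfl
        linarith
      | succ m ih =>
        intro t h2 hEq
        have ht1 : 1 < d (t + 1) := ih (t + 1) (by omega) (by omega)
        rw [hd t h2 (by omega)]
        have h1 : ρ ^ 2 / d (t + 1) ≤ ρ ^ 2 := div_le_self (sq_nonneg ρ) (le_of_lt ht1)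
        have h2' := hξ t (by omega) (by omega)
        linarith
    intro t h2 hle
    exact key (T - t) t h2 (by omega)
  have hd1pos : 0 < d 1 := by
    rw [hd1]
    have h2 : 1 < d 2 := hdpos2 2 le_rfl hT
    have h1 : ρ ^ 2 / d 2 ≤ ρ ^ 2 := div_le_self (sq_nonneg ρ) (le_of_lt h2)
    have := hξ 1 le_rfl (by omega)
    linarith
  have hdpos : ∀ t, 1 ≤ t → t ≤ T → 0 < d t := by
    intro t h1 h2
    rcases Nat.eq_or_lt_of_le h1 with h | h
    · rw [← h]; exact hd1pos
    · linarith [hdpos2 t h h2]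
  -- δ is positive
  have hδpos : ∀ t, 1 ≤ t → t ≤ T - 1 → 1 < δ t := by
    intro t
    induction t with
    | zero => omega
    | succ n ih =>
      intro _ hle
      rcases Nat.eq_zero_or_pos n with h | h
      · subst h
        rw [hδ1]
        have := hξ 1 le_rfl (by omega)
        linarith
      · have hn : 1 < δ n := ih (by omega) (by omega)
        rw [hδ (n + 1) (by omega) hle]
        have h1 : ρ ^ 2 / δ ((n + 1) - 1) ≤ ρ ^ 2 := by
          simp only [Nat.add_sub_cancel]
          exact div_le_self (sq_nonneg ρ) (le_of_lt hn)
        have := hξ (n + 1) (by omega) (by omega)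
        linarith
  have hδTpos : 0 < δ T := by
    rw [hδT]
    have h2 : 1 < δ (T - 1) := hδpos (T - 1) (by omega) le_rfl
    have h1 : ρ ^ 2 / δ (T - 1) ≤ ρ ^ 2 := div_le_self (sq_nonneg ρ) (le_of_lt h2)
    have := hξ T (by omega) le_rfl
    linarith
  -- v is nonzero
  have hvne : ∀ t, 1 ≤ t → t ≤ T → v t ≠ 0 := by
    intro t
    induction t with
    | zero => omega
    | succ n ih =>
      intro _ hle
      rcases Nat.eq_zero_or_pos n with h | h
      · subst h
        rw [hv1]
        exact one_div_ne_zero (ne_of_gt hd1pos)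
      · rw [hv (n + 1) (by omega) hle]
        simp only [Nat.add_sub_cancel]
        exact mul_ne_zero (div_ne_zero hρ0 (ne_of_gt (hdpos (n + 1) (by omega) hle)))
          (ih h (by omega))
  have hvT : v T ≠ 0 := hvne T (by omega) le_rfl
  -- the linear system
  have hmain : (sigmaStar T ρ ξ).mulVec (fun i : Fin T => v T * u ((i : ℕ) + 1)) =
      (fun i : Fin T => if (i : ℕ) = T - 1 then (1 : ℝ) else 0) := by
    funext i
    rw [tri_row]
    by_cases hlast : (i : ℕ) = T - 1
    · -- last row
      rw [if_pos hlast, if_pos (Or.inr hlast), dif_neg (by omega), dif_pos ⟨by omega, by omega⟩]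
      have hTi : (i : ℕ) + 1 = T := by omega
      have hT1 : (i : ℕ) - 1 + 1 = T - 1 := by omega
      simp only [Fin.val_mk]
      rw [hTi, hT1]
      have huT1 : u (T - 1) = (ρ / δ (T - 1)) * u T := by
        have := hu (T - 1) (by omega) le_rfl
        rwa [(by omega : T - 1 + 1 = T)] at this
      have hδ1pos : 0 < δ (T - 1) := by linarith [hδpos (T - 1) (by omega) le_rfl]
      have hB : ρ * u (T - 1) = ρ ^ 2 / δ (T - 1) * u T := by rw [huT1]; ring
      have hC : δ T * (v T * u T) = 1 := by
        rw [huT]; field_simp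
      linear_combination (-(v T)) * hB - (v T * u T) * hδT + hC
    · rw [if_neg hlast]
      by_cases h0 : (i : ℕ) = 0
      · -- first row
        rw [if_pos (Or.inl h0), dif_pos (by omega), dif_neg (by omega)]
        simp only [Fin.val_mk]
        have e0 : (i : ℕ) + 1 = 1 := by omega
        rw [e0]
        have hu1 : u 1 = (ρ / δ 1) * u 2 := hu 1 le_rfl (by omega)
        have hδ1pos : (0:ℝ) < δ 1 := by rw [hδ1]; linarith [hξ 1 le_rfl (by omega)]
        have hA : δ 1 * u 1 = ρ * u 2 := by
          rw [hu1]; field_simp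
        linear_combination v T * hA - v T * u 1 * hδ1
      · -- middle row
        rw [if_neg (by omega : ¬((i:ℕ) = 0 ∨ (i:ℕ) = T - 1)),
          dif_pos (by omega), dif_pos ⟨by omega, by omega⟩]
        set t := (i : ℕ) + 1 with ht
        have ht2 : 2 ≤ t := by omega
        have htT : t ≤ T - 1 := by omega
        have hδt := hδ t ht2 htT
        have hut := hu t (by omega) htT
        have hut1 : u (t - 1) = (ρ / δ (t - 1)) * u t := by
          have := hu (t - 1) (by omega) (by omega)
          rwa [(by omega : t - 1 + 1 = t)] at this
        have hδtpos : 0 < δ t := by linarith [hδpos t (by omega) htT]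
        have hδt1pos : 0 < δ (t - 1) := by linarith [hδpos (t - 1) (by omega) (by omega)]
        simp only [Fin.val_mk]
        have e2 : (i : ℕ) - 1 + 1 = t - 1 := by omega
        rw [e2]
        have hA : ρ * u (t + 1) = δ t * u t := by
          rw [hut]; field_simp
        have hB : ρ * u (t - 1) = ρ ^ 2 / δ (t - 1) * u t := by rw [hut1]; ring
        linear_combination (-(v T)) * hA + (-(v T)) * hB - (v T * u t) * hδt
  -- bidiagonal factorization for invertibility
  set B : Matrix (Fin T) (Fin T) ℝ := Matrix.of (fun i j =>
    if i = j then d ((i : ℕ) + 1) else if (j : ℕ) = (i : ℕ) + 1 then -ρ else 0) with hBdef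
  set L : Matrix (Fin T) (Fin T) ℝ := Matrix.of (fun i j =>
    if i = j then (1 : ℝ) else if (i : ℕ) = (j : ℕ) + 1 then -(ρ / d ((i : ℕ) + 1)) else 0)
    with hLdef
  have hLval : ∀ i j : Fin T, L i j =
      if (i : ℕ) = (j : ℕ) then (1 : ℝ)
      else if (i : ℕ) = (j : ℕ) + 1 then -(ρ / d ((i : ℕ) + 1)) else 0 := by
    intro i j
    simp only [hLdef, Matrix.of_apply]
    by_cases h : i = j
    · subst h; simp
    · rw [if_neg h, if_neg (fun hh => h (Fin.ext hh))]
  have hBL : sigmaStar T ρ ξ = B * L := by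
    ext i j
    rw [Matrix.mul_apply]
    have hsplit : ∀ k : Fin T, B i k * L k j =
        (if (k : ℕ) = (i : ℕ) then d ((i : ℕ) + 1) * L k j else 0)
        + (if (k : ℕ) = (i : ℕ) + 1 then -ρ * L k j else 0) := by
      intro k
      simp only [hBdef, Matrix.of_apply]
      by_cases h1 : i = k
      · subst h1
        rw [if_pos rfl, if_pos rfl, if_neg (by omega)]
        ring
      · have h1' : ¬ ((k : ℕ) = (i : ℕ)) := fun h => h1 (Fin.ext h.symm)
        rw [if_neg h1, if_neg h1']
        by_cases h2 : (k : ℕ) = (i : ℕ) + 1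
        · rw [if_pos h2, if_pos h2]; ring
        · rw [if_neg h2, if_neg h2]; ring
    rw [Finset.sum_congr rfl (fun k _ => hsplit k), Finset.sum_add_distrib,
      sum_if_eq, sum_if_eq, dif_pos i.2]
    have hEta : (⟨(i : ℕ), i.2⟩ : Fin T) = i := Fin.eta i i.2
    rw [hEta]
    simp only [sigmaStar, Matrix.of_apply]
    by_cases h1 : i = j
    · subst h1
      rw [if_pos rfl, hLval]
      rw [if_pos rfl]
      by_cases hlast : (i : ℕ) = T - 1
      · rw [dif_neg (by omega), if_pos (Or.inr hlast)]
        have e : (i : ℕ) + 1 = T := by omega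
        rw [e, hdT]
        ring
      · rw [dif_pos (by omega : (i : ℕ) + 1 < T), hLval]
        simp only [Fin.val_mk]
        rw [if_neg (show ¬((i : ℕ) + 1 = (i : ℕ)) by omega), if_pos trivial]
        have hdne : d ((i : ℕ) + 1 + 1) ≠ 0 :=
          ne_of_gt (hdpos ((i : ℕ) + 1 + 1) (by omega) (by omega))
        by_cases h0 : (i : ℕ) = 0
        · rw [if_pos (Or.inl h0)]
          have e1 : (i : ℕ) + 1 = 1 := by omega
          have e2 : (i : ℕ) + 1 + 1 = 2 := by omega
          rw [e1, (by norm_num : (1:ℕ) + 1 = 2), hd1]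
          rw [e2] at hdne
          field_simp
          ring
        · rw [if_neg (by omega)]
          rw [hd ((i : ℕ) + 1) (by omega) (by omega)]
          field_simp
          ring
    · have h1' : ¬ ((i : ℕ) = (j : ℕ)) := fun h => h1 (Fin.ext h)
      rw [if_neg h1, hLval, if_neg h1']
      by_cases h2 : (j : ℕ) = (i : ℕ) + 1
      · rw [if_pos (by omega : Int.natAbs ((i : ℤ) - (j : ℤ)) = 1), if_neg (by omega),
          dif_pos (by omega : (i : ℕ) + 1 < T), hLval]
        simp only [Fin.val_mk]
        rw [if_pos (by omega)]
        ring
      · by_cases h3 : (i : ℕ) = (j : ℕ) + 1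
        · rw [if_pos (by omega : Int.natAbs ((i : ℤ) - (j : ℤ)) = 1), if_pos h3]
          have hdne : d ((i : ℕ) + 1) ≠ 0 :=
            ne_of_gt (hdpos ((i : ℕ) + 1) (by omega) (by omega))
          have hz : (if h : (i : ℕ) + 1 < T then -ρ * L ⟨(i : ℕ) + 1, h⟩ j else 0) = 0 := by
            split_ifs with h
            · rw [hLval]
              simp only [Fin.val_mk]
              rw [if_neg (by omega), if_neg (by omega)]
              ring
            · rfl
          rw [hz]
          field_simp
          ring
        · rw [if_neg (by omega : ¬ Int.natAbs ((i : ℤ) - (j : ℤ)) = 1), if_neg h3]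
          have hz : (if h : (i : ℕ) + 1 < T then -ρ * L ⟨(i : ℕ) + 1, h⟩ j else 0) = 0 := by
            split_ifs with h
            · rw [hLval]
              simp only [Fin.val_mk]
              rw [if_neg (by omega), if_neg (by omega)]
              ring
            · rfl
          rw [hz]
          ring
  have hBtri : B.BlockTriangular id := by
    intro a b hab
    have hba : (b : ℕ) < (a : ℕ) := hab
    simp only [hBdef, Matrix.of_apply]
    rw [if_neg (by intro h; subst h; omega), if_neg (by omega)]
  have hLtri : L.BlockTriangular OrderDual.toDual := by
    intro a b hab
    have hba : (a : ℕ) < (b : ℕ) := hab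
    rw [hLval, if_neg (by omega), if_neg (by omega)]
  have hdetB : B.det = ∏ i : Fin T, d ((i : ℕ) + 1) := by
    rw [Matrix.det_of_upperTriangular hBtri]
    apply Finset.prod_congr rfl
    intro i _
    simp [hBdef]
  have hdetL : L.det = 1 := by
    rw [Matrix.det_of_lowerTriangular L hLtri]
    apply Finset.prod_eq_one
    intro i _
    rw [hLval, if_pos rfl]
  have hdetne : (sigmaStar T ρ ξ).det ≠ 0 := by
    rw [hBL, Matrix.det_mul, hdetB, hdetL, mul_one]
    apply Finset.prod_ne_zero_iff.mpr
    intro i _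
    exact ne_of_gt (hdpos ((i : ℕ) + 1) (by omega) (by omega))
  have hunit : IsUnit (sigmaStar T ρ ξ) :=
    (Matrix.isUnit_iff_isUnit_det _).mpr (isUnit_iff_ne_zero.mpr hdetne)
  refine ⟨hunit, ?_, hmain⟩
  rw [← hmain, Matrix.mulVec_mulVec,
    Matrix.nonsing_inv_mul _ (isUnit_iff_ne_zero.mpr hdetne), Matrix.one_mulVec]
end

section
/- (Closed-form credibility factors under the AR(1) state-space model.) Let T ≥ 2 be an integer, ρ ∈ (−1,1) with ρ ≠ 0, σ > 0, and let λ_1,…,λ_T, λ_{T+1} > 0 and q_1,…,q_T > 0 be real numbers. Set ξ_t = σ²(1−ρ²)λ_t²/q_t, and let u_t, v_t be the associated recursive sequences. Let Σ_T be the T×T matrix with diagonal entries [Σ_T]_{t,t} = q_t + σ²λ_t² and off-diagonal entries [Σ_T]_{s,t} = σ²λ_sλ_t ρ^{|s−t|} for s ≠ t, and let c ∈ ℝ^T be the vector with c_t = σ²λ_tλ_{T+1}ρ^{T+1−t}. Then Σ_T is invertible and the credibility factors α̂ = Σ_T^{−1}c are given explicitly by α̂_t = ρ(1−ρ²)σ²λ_{T+1}·v_T·u_t·λ_t/q_t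 for t = 1,…,T; consequently the standardized credibility factors α̂*_t = λ_t·α̂_t equal ρ(1−ρ²)σ²λ_{T+1}·v_T·u_t·λ_t²/q_t. -/
open Matrix

/-- Covariance matrix of the observations in the AR(1) state-space model:
diagonal entries `q_t + σ²λ_t²`, off-diagonal entries `σ²λ_sλ_tρ^{|s−t|}`
(one-based sequences `lam`, `q`). -/
noncomputable def covMat (T : ℕ) (ρ σ : ℝ) (lam q : ℕ → ℝ) :
    Matrix (Fin T) (Fin T) ℝ :=
  Matrix.of fun s t =>
    if s = t then q ((s : ℕ) + 1) + σ ^ 2 * (lam ((s : ℕ) + 1)) ^ 2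
    else σ ^ 2 * lam ((s : ℕ) + 1) * lam ((t : ℕ) + 1) *
      ρ ^ (Int.natAbs ((s : ℤ) - (t : ℤ)))

/-!
Write `Σ_T = Q + σ² Λ K Λ` with `Q = diag q`, `Λ = diag λ` and `K = (ρ^|s-t|)` the
Kac–Murdock–Szegő matrix. Since `K = L · diag(1, 1-ρ², …, 1-ρ²) · Lᵀ` with
`L_{tm} = ρ^(t-m)` for `m ≤ t`, `K` is positive semidefinite and `Σ_T` is positive definite.

`K⁻¹` is `(1-ρ²)⁻¹ J` with `J` tridiagonal, diagonal `(1, 1+ρ², …, 1+ρ², 1)` and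
off-diagonal `-ρ`. The `δ`-recursion is Gaussian elimination for `J + diag ξ` and the
`u`-recursion its back substitution, so `x = v_T u` solves `(J + diag ξ) x = e_T`; the pivots
`δ_t`, `d_t` are continued fractions that stay `≥ 1`, which makes `u` well defined and
`v_T ≠ 0`. Multiplying the system by `K`, which amounts to running the forward and backward
AR(1) filters over `g = ξ x`, gives `(1-ρ²) x + K (ξ x) = K e_T`, and this is `Σ_T α̂ = c`
after scaling by `Λ`.
-/

def arFilter (ρ : ℝ) (g : ℕ → ℝ) (t : ℕ) : ℝ :=
  ∑ k ∈ Finset.range (t + 1), ρ ^ (t - k) * g k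

def arBackwardFilter (ρ : ℝ) (g : ℕ → ℝ) (n t : ℕ) : ℝ :=
  ∑ k ∈ Finset.Ico t n, ρ ^ (k - t) * g k

section Filters

variable {ρ : ℝ}

@[simp] lemma arFilter_zero (g : ℕ → ℝ) : arFilter ρ g 0 = g 0 := by
  simp [arFilter]

lemma arFilter_succ (g : ℕ → ℝ) (t : ℕ) :
    arFilter ρ g (t + 1) = ρ * arFilter ρ g t + g (t + 1) := by
  rw [arFilter, Finset.sum_range_succ, Nat.sub_self, pow_zero, one_mul, arFilter, Finset.mul_sum]
  congr 1
  refine Finset.sum_congr rfl fun k hk => ?_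
  rw [Nat.sub_add_comm (Finset.mem_range_succ_iff.mp hk), pow_succ]
  ring

@[simp] lemma arBackwardFilter_self (g : ℕ → ℝ) (n : ℕ) :
    arBackwardFilter ρ g n n = 0 := by
  simp [arBackwardFilter]

lemma arBackwardFilter_of_lt (g : ℕ → ℝ) {n t : ℕ} (ht : t < n) :
    arBackwardFilter ρ g n t = g t + ρ * arBackwardFilter ρ g n (t + 1) := by
  rw [arBackwardFilter, Finset.sum_eq_sum_Ico_succ_bot ht, Nat.sub_self, pow_zero, one_mul,
    arBackwardFilter, Finset.mul_sum]
  congr 1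
  refine Finset.sum_congr rfl fun k hk => ?_
  rw [show k - t = k - (t + 1) + 1 by grind, pow_succ]
  ring

lemma sum_pow_natAbs_mul_eq_arFilter_add (g : ℕ → ℝ) {n t : ℕ} (ht : t < n) :
    ∑ k ∈ Finset.range n, ρ ^ ((t : ℤ) - k).natAbs * g k =
      arFilter ρ g t + ρ * arBackwardFilter ρ g n (t + 1) := by
  rw [← Finset.sum_range_add_sum_Ico _ ht, arFilter, arBackwardFilter, Finset.mul_sum]
  congr 1
  · refine Finset.sum_congr rfl fun k hk => ?_
    rw [show ((t : ℤ) - k).natAbs = t - k by grind]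
  · refine Finset.sum_congr rfl fun k hk => ?_
    rw [show ((t : ℤ) - k).natAbs = k - (t + 1) + 1 by grind, pow_succ]
    ring

end Filters

noncomputable def kmsMatrix (n : ℕ) (ρ : ℝ) : Matrix (Fin n) (Fin n) ℝ :=
  Matrix.of fun s t => ρ ^ ((s : ℤ) - t).natAbs

namespace kmsMatrix

variable {n : ℕ} {ρ : ℝ}

def innovationWeight (ρ : ℝ) (m : ℕ) : ℝ := if m = 0 then 1 else 1 - ρ ^ 2

def impulseResponse (n : ℕ) (ρ : ℝ) : Matrix (Fin n) (Fin n) ℝ :=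
  Matrix.of fun t m => if (m : ℕ) ≤ t then ρ ^ ((t : ℕ) - m) else 0

lemma arFilter_innovationWeight (s : ℕ) : arFilter (ρ ^ 2) (innovationWeight ρ) s = 1 := by
  induction s with
  | zero => simp [innovationWeight]
  | succ s ih =>
    rw [arFilter_succ, ih, innovationWeight, if_neg s.succ_ne_zero]
    ring

lemma sum_impulse_mul_impulse {s t : ℕ} (hst : s ≤ t) (hs : s < n) :
    ∑ m : Fin n, (if (m : ℕ) ≤ s then ρ ^ (s - m) else 0) * innovationWeight ρ m *
      (if (m : ℕ) ≤ t then ρ ^ (t - m) else 0) = ρ ^ (t - s) := by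
  rw [Fin.sum_univ_eq_sum_range (fun m => (if m ≤ s then ρ ^ (s - m) else 0) *
    innovationWeight ρ m * (if m ≤ t then ρ ^ (t - m) else 0)) n,
    ← Finset.sum_subset (Finset.range_subset_range.2 hs) fun m _ hm => by
      rw [if_neg (by simpa using hm), zero_mul, zero_mul]]
  have hterm : ∀ m ∈ Finset.range (s + 1),
      (if m ≤ s then ρ ^ (s - m) else 0) * innovationWeight ρ m *
        (if m ≤ t then ρ ^ (t - m) else 0) =
      ρ ^ (t - s) * ((ρ ^ 2) ^ (s - m) * innovationWeight ρ m) := by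
    intro m hm
    have hms := Finset.mem_range_succ_iff.mp hm
    rw [if_pos hms, if_pos (hms.trans hst), ← pow_mul,
      show t - m = (t - s) + (s - m) by omega, pow_add]
    ring
  rw [Finset.sum_congr rfl hterm, ← Finset.mul_sum, ← arFilter, arFilter_innovationWeight,
    mul_one]

theorem eq_impulseResponse_mul_diagonal_mul_transpose :
    kmsMatrix n ρ = impulseResponse n ρ * diagonal (fun m : Fin n => innovationWeight ρ m) *
      (impulseResponse n ρ)ᵀ := by
  ext s t
  rw [mul_apply]
  simp only [mul_diagonal, kmsMatrix, impulseResponse, transpose_apply, of_apply]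
  rcases le_total (s : ℕ) t with hst | hts
  · rw [sum_impulse_mul_impulse hst s.isLt]
    congr 1
    omega
  · rw [show ((s : ℤ) - t).natAbs = s - t by omega, ← sum_impulse_mul_impulse hts t.isLt]
    exact Finset.sum_congr rfl fun m _ => by ring

theorem posSemidef (hρ : ρ ^ 2 ≤ 1) : (kmsMatrix n ρ).PosSemidef := by
  rw [eq_impulseResponse_mul_diagonal_mul_transpose, ← conjTranspose_eq_transpose_of_trivial]
  refine (PosSemidef.diagonal fun m => ?_).mul_mul_conjTranspose_same _
  change 0 ≤ innovationWeight ρ m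
  unfold innovationWeight
  split_ifs <;> linarith

section Tridiagonal

variable {w : ℝ} {x g : ℕ → ℝ}

lemma arFilter_of_tridiagonal (h_first : x 0 - ρ * x 1 + g 0 = 0)
    (h_mid : ∀ t, t + 2 < n →
      (1 + ρ ^ 2) * x (t + 1) - ρ * x t - ρ * x (t + 2) + g (t + 1) = 0)
    {t : ℕ} (ht : t + 1 < n) : arFilter ρ g t = ρ * x (t + 1) - x t := by
  induction t with
  | zero => rw [arFilter_zero]; linarith
  | succ t ih =>
    rw [arFilter_succ, ih (by omega)]
    linear_combination h_mid t ht

lemma arBackwardFilter_of_tridiagonal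
    (h_mid : ∀ t, t + 2 < n →
      (1 + ρ ^ 2) * x (t + 1) - ρ * x t - ρ * x (t + 2) + g (t + 1) = 0)
    (h_last : x (n - 1) - ρ * x (n - 2) + g (n - 1) = w) {t : ℕ} (ht : t + 2 ≤ n) :
    arBackwardFilter ρ g n (t + 1) = ρ ^ (n - 2 - t) * w - x (t + 1) + ρ * x t := by
  have hn : 2 ≤ n := le_of_add_le_right ht
  have hle : t ≤ n - 2 := by omega
  clear ht
  induction hle using Nat.decreasingInduction with
  | self =>
    rw [arBackwardFilter_of_lt g (by omega), show n - 2 + 1 + 1 = n by omega,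
      arBackwardFilter_self, show n - 2 + 1 = n - 1 by omega, Nat.sub_self, pow_zero]
    linear_combination h_last
  | of_succ t ht ih =>
    rw [arBackwardFilter_of_lt g (by omega), ih, show n - 2 - t = n - 2 - (t + 1) + 1 by omega,
      pow_succ]
    linear_combination h_mid t (by omega)

/-- This is `K J = (1 - ρ²) I` for the tridiagonal `J` with diagonal `(1, 1+ρ², …, 1+ρ², 1)` and
off-diagonal `-ρ`, in the form `J x + g = w e_{n-1} → K g = w K e_{n-1} - (1 - ρ²) x`. -/
theorem mulVec_of_tridiagonal (hn : 2 ≤ n) (h_first : x 0 - ρ * x 1 + g 0 = 0)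
    (h_mid : ∀ t, t + 2 < n →
      (1 + ρ ^ 2) * x (t + 1) - ρ * x t - ρ * x (t + 2) + g (t + 1) = 0)
    (h_last : x (n - 1) - ρ * x (n - 2) + g (n - 1) = w) (t : Fin n) :
    (kmsMatrix n ρ *ᵥ fun k => g k) t = ρ ^ (n - 1 - t) * w - (1 - ρ ^ 2) * x t := by
  simp only [mulVec, dotProduct, kmsMatrix, of_apply]
  rw [Fin.sum_univ_eq_sum_range (fun k => ρ ^ ((t : ℤ) - k).natAbs * g k),
    sum_pow_natAbs_mul_eq_arFilter_add g t.isLt]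
  by_cases ht : (t : ℕ) + 1 < n
  · rw [arFilter_of_tridiagonal h_first h_mid ht, arBackwardFilter_of_tridiagonal h_mid h_last ht,
      show n - 1 - t = n - 2 - t + 1 by omega, pow_succ]
    ring
  · obtain ⟨m, hm⟩ : ∃ m, (t : ℕ) = m + 1 := ⟨n - 2, by omega⟩
    rw [show n - 1 = m + 1 by omega, show n - 2 = m by omega] at h_last
    rw [show (t : ℕ) + 1 = n by omega, arBackwardFilter_self, hm, arFilter_succ,
      arFilter_of_tridiagonal h_first h_mid (by omega), show n - 1 - (m + 1) = 0 by omega, pow_zero]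
    linear_combination h_last

end Tridiagonal

end kmsMatrix

lemma covMat_eq (T : ℕ) (ρ σ : ℝ) (lam q : ℕ → ℝ) :
    covMat T ρ σ lam q = diagonal (fun s : Fin T => q (s + 1)) +
      σ ^ 2 • (diagonal (fun s : Fin T => lam (s + 1)) * kmsMatrix T ρ *
        diagonal (fun s : Fin T => lam (s + 1))) := by
  ext s t
  simp only [covMat, kmsMatrix, of_apply, Matrix.add_apply, Matrix.smul_apply, diagonal_mul,
    mul_diagonal, diagonal_apply, smul_eq_mul]
  split_ifs with h
  · subst h
    simp only [sub_self, Int.natAbs_zero, pow_zero]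
    ring
  · ring

theorem covMat_posDef {T : ℕ} {ρ : ℝ} (σ : ℝ) {lam q : ℕ → ℝ} (hρ : ρ ^ 2 ≤ 1)
    (hq : ∀ t, 1 ≤ t → t ≤ T → 0 < q t) : (covMat T ρ σ lam q).PosDef := by
  rw [covMat_eq]
  refine (PosDef.diagonal fun s => hq _ (by omega) (by omega)).add_posSemidef
    (PosSemidef.smul ?_ (sq_nonneg σ))
  simpa using (kmsMatrix.posSemidef hρ).conjTranspose_mul_mul_same
    (diagonal fun s : Fin T => lam (s + 1))

theorem covMat_mulVec_of_tridiagonal {T : ℕ} (hT : 2 ≤ T) {ρ σ : ℝ}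
    {lam q ξ x : ℕ → ℝ}
    (hq : ∀ t, 1 ≤ t → t ≤ T → q t ≠ 0)
    (hξ : ∀ t, ξ t = σ ^ 2 * (1 - ρ ^ 2) * lam t ^ 2 / q t)
    (h_first : (1 + ξ 1) * x 1 = ρ * x 2)
    (h_mid : ∀ t, 2 ≤ t → t ≤ T - 1 →
      (1 + ρ ^ 2 + ξ t) * x t = ρ * x (t - 1) + ρ * x (t + 1))
    (h_last : (1 + ξ T) * x T = ρ * x (T - 1) + 1) :
    covMat T ρ σ lam q *ᵥ (fun s : Fin T => ρ * (1 - ρ ^ 2) * σ ^ 2 * lam (T + 1) *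
        x (s + 1) * lam (s + 1) / q (s + 1)) =
      fun s : Fin T => σ ^ 2 * lam (s + 1) * lam (T + 1) * ρ ^ (T - s) := by
  have hK := kmsMatrix.mulVec_of_tridiagonal (ρ := ρ) (x := fun i => x (i + 1))
    (g := fun i => ξ (i + 1) * x (i + 1)) (w := 1) hT (by linear_combination h_first)
    (fun t ht => by
      have h := h_mid (t + 2) (by omega) (by omega)
      rw [show t + 2 - 1 = t + 1 by omega] at h
      linear_combination h)
    (by
      rw [show T - 2 + 1 = T - 1 by omega, show T - 1 + 1 = T by omega]
      linear_combination h_last)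
  have hΛ : (diagonal fun s : Fin T => lam (s + 1)) *ᵥ (fun s : Fin T => ρ * (1 - ρ ^ 2) *
      σ ^ 2 * lam (T + 1) * x (s + 1) * lam (s + 1) / q (s + 1)) =
      (ρ * lam (T + 1)) • fun k : Fin T => ξ (k + 1) * x (k + 1) := by
    funext k
    simp only [mulVec_diagonal, Pi.smul_apply, smul_eq_mul, hξ]
    ring
  funext t
  rw [covMat_eq, add_mulVec, smul_mulVec, ← mulVec_mulVec, ← mulVec_mulVec, hΛ, mulVec_smul]
  simp only [Pi.add_apply, Pi.smul_apply, smul_eq_mul, mulVec_diagonal, hK t]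
  have hqt := hq (t + 1) (by omega) (by omega)
  rw [show T - (t : ℕ) = T - 1 - t + 1 by omega, pow_succ]
  field_simp
  ring

section Elimination

variable {T : ℕ} {ρ : ℝ} {ξ d v δ u : ℕ → ℝ}

lemma one_le_pivot_step {a p : ℝ} (ha : 0 ≤ a) (hp : 1 ≤ p) :
    1 ≤ 1 + ρ ^ 2 + a - ρ ^ 2 / p := by
  have := div_le_self (sq_nonneg ρ) hp
  linarith

lemma pos_last_pivot_step {a p : ℝ} (hρ : ρ ^ 2 < 1) (ha : 0 ≤ a) (hp : 1 ≤ p) :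
    0 < 1 + a - ρ ^ 2 / p := by
  have := div_le_self (sq_nonneg ρ) hp
  linarith

lemma one_le_forwardPivot (hξ : ∀ t, 1 ≤ t → t ≤ T → 0 ≤ ξ t) (hδ1 : δ 1 = 1 + ξ 1)
    (hδ : ∀ t, 2 ≤ t → t ≤ T - 1 → δ t = 1 + ρ ^ 2 + ξ t - ρ ^ 2 / δ (t - 1))
    {t : ℕ} (ht1 : 1 ≤ t) (ht : t ≤ T - 1) : 1 ≤ δ t := by
  induction t, ht1 using Nat.le_induction with
  | base => linarith [hξ 1 le_rfl (by omega)]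
  | succ t ht1 ih =>
    rw [hδ (t + 1) (by omega) ht, Nat.add_sub_cancel]
    exact one_le_pivot_step (hξ _ (by omega) (by omega)) (ih (by omega))

lemma forwardPivot_ne_zero (hρ : ρ ^ 2 < 1) (hT : 2 ≤ T)
    (hξ : ∀ t, 1 ≤ t → t ≤ T → 0 ≤ ξ t) (hδ1 : δ 1 = 1 + ξ 1)
    (hδ : ∀ t, 2 ≤ t → t ≤ T - 1 → δ t = 1 + ρ ^ 2 + ξ t - ρ ^ 2 / δ (t - 1))
    (hδT : δ T = 1 + ξ T - ρ ^ 2 / δ (T - 1)) {t : ℕ} (ht1 : 1 ≤ t) (ht : t ≤ T) :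
    δ t ≠ 0 := by
  rcases lt_or_eq_of_le ht with ht | rfl
  · linarith [one_le_forwardPivot hξ hδ1 hδ ht1 (by omega)]
  · rw [hδT]
    exact (pos_last_pivot_step hρ (hξ _ ht1 le_rfl)
      (one_le_forwardPivot hξ hδ1 hδ (by omega) le_rfl)).ne'

lemma one_le_backwardPivot (hξ : ∀ t, 1 ≤ t → t ≤ T → 0 ≤ ξ t) (hdT : d T = 1 + ξ T)
    (hd : ∀ t, 2 ≤ t → t ≤ T - 1 → d t = 1 + ρ ^ 2 + ξ t - ρ ^ 2 / d (t + 1))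
    {t : ℕ} (ht2 : 2 ≤ t) (ht : t ≤ T) : 1 ≤ d t := by
  induction ht using Nat.decreasingInduction with
  | self => linarith [hξ T (by omega) le_rfl]
  | of_succ t ht ih =>
    rw [hd t ht2 (by omega)]
    exact one_le_pivot_step (hξ t (by omega) (by omega)) (ih (by omega))

lemma backwardPivot_ne_zero (hρ : ρ ^ 2 < 1) (hT : 2 ≤ T)
    (hξ : ∀ t, 1 ≤ t → t ≤ T → 0 ≤ ξ t) (hdT : d T = 1 + ξ T)
    (hd : ∀ t, 2 ≤ t → t ≤ T - 1 → d t = 1 + ρ ^ 2 + ξ t - ρ ^ 2 / d (t + 1))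
    (hd1 : d 1 = 1 + ξ 1 - ρ ^ 2 / d 2) {t : ℕ} (ht1 : 1 ≤ t) (ht : t ≤ T) : d t ≠ 0 := by
  rcases eq_or_lt_of_le ht1 with rfl | ht2
  · rw [hd1]
    exact (pos_last_pivot_step hρ (hξ 1 le_rfl (by omega))
      (one_le_backwardPivot hξ hdT hd le_rfl hT)).ne'
  · linarith [one_le_backwardPivot hξ hdT hd ht2 ht]

lemma ne_zero_of_ratio_recursion (hρ : ρ ≠ 0) (hd : ∀ t, 1 ≤ t → t ≤ T → d t ≠ 0)
    (hv1 : v 1 = 1 / d 1) (hv : ∀ t, 2 ≤ t → t ≤ T → v t = (ρ / d t) * v (t - 1))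
    {t : ℕ} (ht1 : 1 ≤ t) (ht : t ≤ T) : v t ≠ 0 := by
  induction t, ht1 using Nat.le_induction with
  | base => rw [hv1]; exact one_div_ne_zero (hd 1 le_rfl ht)
  | succ t ht1 ih =>
    rw [hv (t + 1) (by omega) ht, Nat.add_sub_cancel]
    exact mul_ne_zero (div_ne_zero hρ (hd _ (by omega) ht)) (ih (by omega))

lemma first_row_of_backSubst (hT : 2 ≤ T) (hδ1 : δ 1 = 1 + ξ 1) (hδ1_ne : δ 1 ≠ 0)
    (hu : ∀ t, 1 ≤ t → t ≤ T - 1 → u t = (ρ / δ t) * u (t + 1)) :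
    (1 + ξ 1) * u 1 = ρ * u 2 := by
  rw [← hδ1, hu 1 le_rfl (by omega)]
  field_simp

lemma mid_row_of_backSubst
    (hδ : ∀ t, 2 ≤ t → t ≤ T - 1 → δ t = 1 + ρ ^ 2 + ξ t - ρ ^ 2 / δ (t - 1))
    (hδ_ne : ∀ t, 1 ≤ t → t ≤ T → δ t ≠ 0)
    (hu : ∀ t, 1 ≤ t → t ≤ T - 1 → u t = (ρ / δ t) * u (t + 1))
    {t : ℕ} (ht2 : 2 ≤ t) (ht : t ≤ T - 1) :
    (1 + ρ ^ 2 + ξ t) * u t = ρ * u (t - 1) + ρ * u (t + 1) := by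
  have hprev := hu (t - 1) (by omega) (by omega)
  rw [Nat.sub_add_cancel (by omega : 1 ≤ t)] at hprev
  have hδt := hδ_ne t (by omega) (by omega)
  have hδprev := hδ_ne (t - 1) (by omega) (by omega)
  rw [show ξ t = δ t - 1 - ρ ^ 2 + ρ ^ 2 / δ (t - 1) by linarith [hδ t ht2 ht], hprev,
    hu t (by omega) ht]
  field_simp
  ring

lemma last_row_of_backSubst (hT : 2 ≤ T) (hδT : δ T = 1 + ξ T - ρ ^ 2 / δ (T - 1))
    (hδ_ne : ∀ t, 1 ≤ t → t ≤ T → δ t ≠ 0) (huT : u T = 1 / (δ T * v T))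
    (hu : ∀ t, 1 ≤ t → t ≤ T - 1 → u t = (ρ / δ t) * u (t + 1)) :
    (1 + ξ T) * u T = ρ * u (T - 1) + 1 / v T := by
  have hprev := hu (T - 1) (by omega) le_rfl
  rw [Nat.sub_add_cancel (by omega : 1 ≤ T)] at hprev
  have hδT_ne := hδ_ne T (by omega) le_rfl
  have hδprev := hδ_ne (T - 1) (by omega) (by omega)
  rw [show ξ T = δ T - 1 + ρ ^ 2 / δ (T - 1) by linarith, hprev, huT]
  field_simp
  ring

end Elimination

theorem stmt9_general (T : ℕ) (hT : 2 ≤ T) (ρ : ℝ) (hρ1 : -1 < ρ) (hρ2 : ρ < 1)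
    (hρ0 : ρ ≠ 0) (σ : ℝ) (lam q : ℕ → ℝ)
    (hq : ∀ t, 1 ≤ t → t ≤ T → 0 < q t)
    (ξ d v δ u : ℕ → ℝ)
    (hξ : ∀ t, ξ t = σ ^ 2 * (1 - ρ ^ 2) * (lam t) ^ 2 / q t)
    (hdT : d T = 1 + ξ T)
    (hd : ∀ t, 2 ≤ t → t ≤ T - 1 → d t = 1 + ρ ^ 2 + ξ t - ρ ^ 2 / d (t + 1))
    (hd1 : d 1 = 1 + ξ 1 - ρ ^ 2 / d 2)
    (hv1 : v 1 = 1 / d 1)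
    (hv : ∀ t, 2 ≤ t → t ≤ T → v t = (ρ / d t) * v (t - 1))
    (hδ1 : δ 1 = 1 + ξ 1)
    (hδ : ∀ t, 2 ≤ t → t ≤ T - 1 → δ t = 1 + ρ ^ 2 + ξ t - ρ ^ 2 / δ (t - 1))
    (hδT : δ T = 1 + ξ T - ρ ^ 2 / δ (T - 1))
    (huT : u T = 1 / (δ T * v T))
    (hu : ∀ t, 1 ≤ t → t ≤ T - 1 → u t = (ρ / δ t) * u (t + 1)) :
    IsUnit (covMat T ρ σ lam q) ∧
    (∀ t : Fin T,
      (covMat T ρ σ lam q)⁻¹.mulVec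
          (fun s : Fin T =>
            σ ^ 2 * lam ((s : ℕ) + 1) * lam (T + 1) * ρ ^ (T - (s : ℕ))) t =
        ρ * (1 - ρ ^ 2) * σ ^ 2 * lam (T + 1) * v T * u ((t : ℕ) + 1) *
          lam ((t : ℕ) + 1) / q ((t : ℕ) + 1)) ∧
    (∀ t : Fin T,
      lam ((t : ℕ) + 1) *
          (covMat T ρ σ lam q)⁻¹.mulVec
            (fun s : Fin T =>
              σ ^ 2 * lam ((s : ℕ) + 1) * lam (T + 1) * ρ ^ (T - (s : ℕ))) t =
        ρ * (1 - ρ ^ 2) * σ ^ 2 * lam (T + 1) * v T * u ((t : ℕ) + 1) *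
          (lam ((t : ℕ) + 1)) ^ 2 / q ((t : ℕ) + 1)) := by
  have hρ : ρ ^ 2 < 1 := by nlinarith
  have hξ_nonneg : ∀ t, 1 ≤ t → t ≤ T → 0 ≤ ξ t := fun t h1 h2 => by
    have := hq t h1 h2
    have : 0 ≤ 1 - ρ ^ 2 := by linarith
    rw [hξ]
    positivity
  have hδ_ne := fun t => forwardPivot_ne_zero hρ hT hξ_nonneg hδ1 hδ hδT (t := t)
  have hvT : v T ≠ 0 := ne_zero_of_ratio_recursion hρ0
    (fun t => backwardPivot_ne_zero hρ hT hξ_nonneg hdT hd hd1) hv1 hv (by omega) le_rfl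
  have hlast := last_row_of_backSubst hT hδT hδ_ne huT hu
  have hmul := covMat_mulVec_of_tridiagonal (σ := σ) (lam := lam) (x := fun t => v T * u t) hT
    (fun t h1 h2 => (hq t h1 h2).ne') hξ
    (by linear_combination v T * first_row_of_backSubst hT hδ1 (hδ_ne 1 le_rfl (by omega)) hu)
    (fun t h2 ht => by linear_combination v T * mid_row_of_backSubst hδ hδ_ne hu h2 ht)
    (by linear_combination v T * hlast + mul_one_div_cancel hvT)
  have hPD := covMat_posDef σ (lam := lam) hρ.le hq
  have hsol := congrArg ((covMat T ρ σ lam q)⁻¹ *ᵥ ·) hmul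
  simp only [mulVec_mulVec, nonsing_inv_mul _ ((isUnit_iff_isUnit_det _).mp hPD.isUnit),
    one_mulVec] at hsol
  refine ⟨hPD.isUnit, fun t => ?_, fun t => ?_⟩ <;> rw [← hsol] <;> ring

/-- closed-form credibility factors under the AR(1) state-space
model.  With `c_t = σ²λ_tλ_{T+1}ρ^{T+1−t}`, the covariance matrix `Σ_T` is
invertible and the credibility factors `α̂ = Σ_T⁻¹c` satisfy
`α̂_t = ρ(1−ρ²)σ²λ_{T+1} v_T u_t λ_t / q_t`; consequently the standardized
factors `α̂*_t = λ_t α̂_t` equal `ρ(1−ρ²)σ²λ_{T+1} v_T u_t λ_t² / q_t`. -/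
theorem stmt9 (T : ℕ) (hT : 2 ≤ T) (ρ : ℝ) (hρ1 : -1 < ρ) (hρ2 : ρ < 1)
    (hρ0 : ρ ≠ 0) (σ : ℝ) (hσ : 0 < σ) (lam q : ℕ → ℝ)
    (hlam : ∀ t, 1 ≤ t → t ≤ T + 1 → 0 < lam t)
    (hq : ∀ t, 1 ≤ t → t ≤ T → 0 < q t)
    (ξ d v δ u : ℕ → ℝ)
    (hξ : ∀ t, ξ t = σ ^ 2 * (1 - ρ ^ 2) * (lam t) ^ 2 / q t)
    (hdT : d T = 1 + ξ T)
    (hd : ∀ t, 2 ≤ t → t ≤ T - 1 → d t = 1 + ρ ^ 2 + ξ t - ρ ^ 2 / d (t + 1))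
    (hd1 : d 1 = 1 + ξ 1 - ρ ^ 2 / d 2)
    (hv1 : v 1 = 1 / d 1)
    (hv : ∀ t, 2 ≤ t → t ≤ T → v t = (ρ / d t) * v (t - 1))
    (hδ1 : δ 1 = 1 + ξ 1)
    (hδ : ∀ t, 2 ≤ t → t ≤ T - 1 → δ t = 1 + ρ ^ 2 + ξ t - ρ ^ 2 / δ (t - 1))
    (hδT : δ T = 1 + ξ T - ρ ^ 2 / δ (T - 1))
    (huT : u T = 1 / (δ T * v T))
    (hu : ∀ t, 1 ≤ t → t ≤ T - 1 → u t = (ρ / δ t) * u (t + 1)) :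
    IsUnit (covMat T ρ σ lam q) ∧
    (∀ t : Fin T,
      (covMat T ρ σ lam q)⁻¹.mulVec
          (fun s : Fin T =>
            σ ^ 2 * lam ((s : ℕ) + 1) * lam (T + 1) * ρ ^ (T - (s : ℕ))) t =
        ρ * (1 - ρ ^ 2) * σ ^ 2 * lam (T + 1) * v T * u ((t : ℕ) + 1) *
          lam ((t : ℕ) + 1) / q ((t : ℕ) + 1)) ∧
    (∀ t : Fin T,
      lam ((t : ℕ) + 1) *
          (covMat T ρ σ lam q)⁻¹.mulVec
            (fun s : Fin T =>
              σ ^ 2 * lam ((s : ℕ) + 1) * lam (T + 1) * ρ ^ (T - (s : ℕ))) t =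
        ρ * (1 - ρ ^ 2) * σ ^ 2 * lam (T + 1) * v T * u ((t : ℕ) + 1) *
          (lam ((t : ℕ) + 1)) ^ 2 / q ((t : ℕ) + 1)) :=
  stmt9_general T hT ρ hρ1 hρ2 hρ0 σ lam q hq ξ d v δ u hξ hdT hd hd1 hv1 hv hδ1 hδ hδT huT hu
end

section
/- (Regularity of the credibility premium.) Let T ≥ 2 be an integer, ρ ∈ (0,1), σ > 0, and let λ_1,…,λ_T, λ_{T+1} > 0 and q_1,…,q_T > 0 be real numbers. Let Σ_T be the T×T matrix with [Σ_T]_{t,t} = q_t + σ²λ_t² and [Σ_T]_{s,t} = σ²λ_sλ_t ρ^{|s−t|} for s ≠ t, and let c ∈ ℝ^T with c_t = σ²λ_tλ_{T+1}ρ^{T+1−t}. Then Σ_T is invertible and every coordinate of Σ_T^{−1}c is strictly positive: (Σ_T^{−1}c)_t > 0 for t = 1,…,T. -/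
/-!
Write `Σ_T = L (E + σ² R) L` with `L = diag λ`, `E = diag (q / λ²)` and `R = (ρ^{|s-t|})`. The
tridiagonal matrix `P = ar1Prec` satisfies `R P = (1 - ρ²) I`, so with `G = P + σ²(1 - ρ²) E⁻¹` one
gets `(1 - ρ²) Σ_T = L R G E L`; as `c = σ²λ_{T+1}ρ · L R e_T`, this yields
`Σ_T⁻¹ c = (1 - ρ²) σ²λ_{T+1}ρ · (E L)⁻¹ G⁻¹ e_T`. Now `G` has nonpositive off-diagonal entries
and positive row sums, so by the minimum principle `z = G⁻¹ e_T ≥ 0`. Finally, a zero coordinate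
`z_i` would force `0 ≤ (G z)_i ≤ -ρ z_{i+1}`, so positivity spreads from `z_T > 0` downwards.
-/

open Matrix

open Finset

namespace Matrix

variable {n : Type*} [Fintype n]

theorem nonneg_of_nonneg_mulVec {A : Matrix n n ℝ} (hoff : ∀ i j, i ≠ j → A i j ≤ 0)
    (hrow : ∀ i, 0 < ∑ j, A i j) {z : n → ℝ} (hz : 0 ≤ A *ᵥ z) : 0 ≤ z := by
  intro t
  show (0 : ℝ) ≤ z t
  obtain ⟨i, -, hmin⟩ := univ.exists_min_image z ⟨t, mem_univ t⟩
  refine le_trans ?_ (hmin t (mem_univ t))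
  by_contra! hneg
  have hle : (A *ᵥ z) i ≤ z i * ∑ j, A i j := by
    rw [mulVec, dotProduct, mul_sum]
    refine sum_le_sum fun j _ => ?_
    rcases eq_or_ne i j with rfl | hij
    · rw [mul_comm]
    · nlinarith [hoff i j hij, hmin j (mem_univ j)]
  exact absurd (hz i) (not_le.2 (hle.trans_lt (mul_neg_of_neg_of_pos hneg (hrow i))))

theorem det_ne_zero_of_offDiag_nonpos_of_rowSum_pos [DecidableEq n] {A : Matrix n n ℝ}
    (hoff : ∀ i j, i ≠ j → A i j ≤ 0) (hrow : ∀ i, 0 < ∑ j, A i j) : A.det ≠ 0 := by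
  intro h
  obtain ⟨v, hv, hAv⟩ := exists_mulVec_eq_zero_iff.2 h
  have hneg : 0 ≤ -v := nonneg_of_nonneg_mulVec hoff hrow (by rw [mulVec_neg, hAv, neg_zero])
  exact hv (le_antisymm (neg_nonneg.1 hneg) (nonneg_of_nonneg_mulVec hoff hrow hAv.ge))

theorem mulVec_apply_le_of_apply_eq_zero {A : Matrix n n ℝ} (hoff : ∀ i j, i ≠ j → A i j ≤ 0)
    {z : n → ℝ} (hz : 0 ≤ z) {i : n} (hi : z i = 0) (j : n) : (A *ᵥ z) i ≤ A i j * z j := by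
  classical
  have hterm : ∀ k, A i k * z k ≤ 0 := fun k => by
    rcases eq_or_ne i k with rfl | hik
    · rw [hi, mul_zero]
    · exact mul_nonpos_of_nonpos_of_nonneg (hoff i k hik) (hz k)
  rw [mulVec, dotProduct, ← add_sum_erase _ _ (mem_univ j)]
  exact add_le_of_nonpos_right (sum_nonpos fun k _ => hterm k)

section Field

variable {K : Type*} [DecidableEq n] [Field K]

theorem isUnit_det_of_smul_eq_mul_mul_diagonal {S A G : Matrix n n K} {a : K} {d : n → K}
    (hA : IsUnit A.det) (hG : IsUnit G.det) (hd : ∀ i, d i ≠ 0)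
    (h : a • S = A * G * diagonal d) : IsUnit S.det := by
  have hdet := congrArg det h
  rw [det_smul, det_mul, det_mul, det_diagonal] at hdet
  have hne : A.det * G.det * ∏ i, d i ≠ 0 :=
    mul_ne_zero (mul_ne_zero hA.ne_zero hG.ne_zero) (prod_ne_zero_iff.2 fun i _ => hd i)
  rw [← hdet] at hne
  exact isUnit_iff_ne_zero.2 (right_ne_zero_of_mul hne)

theorem inv_mulVec_mulVec_eq_of_smul_eq_mul_mul_diagonal {S A G : Matrix n n K} {a : K}
    {d : n → K} (ha : a ≠ 0) (hA : IsUnit A.det) (hG : IsUnit G.det) (hd : ∀ i, d i ≠ 0)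
    (h : a • S = A * G * diagonal d) (b : n → K) :
    S⁻¹ *ᵥ (A *ᵥ b) = fun i => a * (G⁻¹ *ᵥ b) i / d i := by
  set x : n → K := fun i => a * (G⁻¹ *ᵥ b) i / d i
  have hdx : diagonal d *ᵥ x = a • (G⁻¹ *ᵥ b) := by
    ext i
    rw [mulVec_diagonal, Pi.smul_apply, smul_eq_mul, mul_div_cancel₀ _ (hd i)]
  have hSx : S *ᵥ x = A *ᵥ b := by
    refine smul_right_injective _ ha (?_ : a • (S *ᵥ x) = a • (A *ᵥ b))
    rw [← smul_mulVec, h, ← mulVec_mulVec, hdx, mulVec_smul, mulVec_mulVec, Matrix.mul_assoc,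
      mul_nonsing_inv _ hG, Matrix.mul_one]
  rw [← hSx, mulVec_mulVec,
    nonsing_inv_mul _ (isUnit_det_of_smul_eq_mul_mul_diagonal hA hG hd h), one_mulVec]

end Field

end Matrix

def ar1Corr (T : ℕ) (ρ : ℝ) : Matrix (Fin T) (Fin T) ℝ :=
  of fun i j => ρ ^ Int.natAbs ((i : ℤ) - (j : ℤ))

def ar1PrecDiag (T : ℕ) (ρ : ℝ) (a : ℕ) : ℝ :=
  1 + ρ ^ 2 - (if a = 0 then ρ ^ 2 else 0) - (if a + 1 = T then ρ ^ 2 else 0)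

/-- `(1 - ρ²) • (ar1Corr T ρ)⁻¹`: tridiagonal, with diagonal `(1, 1 + ρ², …, 1 + ρ², 1)`
(just `1 - ρ²` when `T = 1`) and `-ρ` next to the diagonal. -/
def ar1Prec (T : ℕ) (ρ : ℝ) : Matrix (Fin T) (Fin T) ℝ :=
  of fun i j => if (i : ℕ) = j then ar1PrecDiag T ρ i
    else if (i : ℕ) + 1 = j ∨ (j : ℕ) + 1 = i then -ρ else 0

section AR1

variable {T : ℕ} {ρ : ℝ}

theorem ar1Prec_mulVec (f : ℤ → ℝ) (i : Fin T) :
    (ar1Prec T ρ *ᵥ fun k => f k) i = ar1PrecDiag T ρ i * f i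
      - ρ * (if 0 < (i : ℕ) then f (i - 1) else 0)
      - ρ * (if (i : ℕ) + 1 < T then f (i + 1) else 0) := by
  have hsplit : ∀ m : ℕ, (if (i : ℕ) = m then ar1PrecDiag T ρ i
      else if (i : ℕ) + 1 = m ∨ m + 1 = i then -ρ else 0) * f m
      = (if m = i then ar1PrecDiag T ρ i * f m else 0) - (if m + 1 = i then ρ * f m else 0)
        - (if m = i + 1 then ρ * f m else 0) := fun m => by
    split_ifs <;> first | omega | ring
  simp only [mulVec, dotProduct, ar1Prec, of_apply]
  rw [Fin.sum_univ_eq_sum_range (fun m => (if (i : ℕ) = m then ar1PrecDiag T ρ i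
      else if (i : ℕ) + 1 = m ∨ m + 1 = i then -ρ else 0) * f m) T]
  simp only [hsplit, sum_sub_distrib, sum_ite_eq', mem_range, i.isLt, if_true]
  obtain ⟨_ | i, hi⟩ := i
  · simp
  · simp [sum_ite_eq', show ¬ T ≤ i by omega]

theorem ar1Prec_mul_ar1Corr : ar1Prec T ρ * ar1Corr T ρ = (1 - ρ ^ 2) • 1 := by
  ext ⟨i, hi⟩ ⟨j, hj⟩
  rw [Matrix.smul_apply, one_apply]
  show (ar1Prec T ρ *ᵥ fun k => ρ ^ ((k : ℤ) - j).natAbs) ⟨i, hi⟩ = _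
  rw [ar1Prec_mulVec fun m : ℤ => ρ ^ (m - j).natAbs]
  simp only [Fin.mk.injEq, smul_eq_mul, mul_ite, mul_one, mul_zero]
  unfold ar1PrecDiag
  rcases lt_trichotomy i j with h | rfl | h
  · obtain ⟨d, hd⟩ : ∃ d : ℕ, ((i : ℤ) - j).natAbs = d + 1 :=
      ⟨_, (Nat.succ_pred_eq_of_pos (by omega)).symm⟩
    rw [hd, show ((i : ℤ) - 1 - j).natAbs = d + 2 by omega,
      show ((i : ℤ) + 1 - j).natAbs = d by omega]
    split_ifs <;> first | omega | ring
  · simp only [sub_self, Int.natAbs_zero, show ((i : ℤ) - 1 - i).natAbs = 1 by omega,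
      show ((i : ℤ) + 1 - i).natAbs = 1 by omega]
    split_ifs <;> first | omega | ring
  · obtain ⟨d, hd⟩ : ∃ d : ℕ, ((i : ℤ) - j).natAbs = d + 1 :=
      ⟨_, (Nat.succ_pred_eq_of_pos (by omega)).symm⟩
    rw [hd, show ((i : ℤ) - 1 - j).natAbs = d by omega,
      show ((i : ℤ) + 1 - j).natAbs = d + 2 by omega]
    split_ifs <;> first | omega | ring

theorem ar1Prec_transpose : (ar1Prec T ρ)ᵀ = ar1Prec T ρ := by
  ext i j
  simp only [transpose_apply, ar1Prec, of_apply]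
  split_ifs with h1 h2 <;> first | omega | rw [h1] | rfl

theorem ar1Corr_transpose : (ar1Corr T ρ)ᵀ = ar1Corr T ρ := by
  ext i j
  simp only [transpose_apply, ar1Corr, of_apply]
  rw [← Int.natAbs_neg, neg_sub]

theorem ar1Corr_mul_ar1Prec : ar1Corr T ρ * ar1Prec T ρ = (1 - ρ ^ 2) • 1 := by
  rw [← ar1Prec_transpose, ← ar1Corr_transpose, ← transpose_mul, ar1Prec_mul_ar1Corr,
    transpose_smul, transpose_one]

theorem isUnit_det_ar1Corr (hρ : ρ ^ 2 ≠ 1) : IsUnit (ar1Corr T ρ).det := by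
  refine isUnit_det_of_left_inverse (B := (1 - ρ ^ 2)⁻¹ • ar1Prec T ρ) ?_
  rw [smul_mul_assoc, ar1Prec_mul_ar1Corr, smul_smul, inv_mul_cancel₀ (sub_ne_zero.2 hρ.symm),
    one_smul]

theorem ar1Corr_mulVec_single_last (n : ℕ) :
    ar1Corr (n + 1) ρ *ᵥ Pi.single (Fin.last n) 1 = fun t : Fin (n + 1) => ρ ^ (n - (t : ℕ)) := by
  ext t
  simp only [mulVec_single, ar1Corr, MulOpposite.op_one, one_smul, col_apply, of_apply,
    Fin.val_last]
  congr 1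
  omega

theorem ar1Prec_apply_nonpos (hρ : 0 ≤ ρ) {i j : Fin T} (hij : i ≠ j) :
    ar1Prec T ρ i j ≤ 0 := by
  simp only [ar1Prec, of_apply, if_neg (Fin.val_ne_of_ne hij)]
  split_ifs <;> linarith

theorem ar1Prec_castSucc_succ {n : ℕ} (i : Fin n) :
    ar1Prec (n + 1) ρ i.castSucc i.succ = -ρ := by
  simp [ar1Prec]

theorem ar1Prec_rowSum_nonneg (hρ0 : 0 ≤ ρ) (hρ1 : ρ ≤ 1) (i : Fin T) :
    0 ≤ ∑ j, ar1Prec T ρ i j := by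
  have h := ar1Prec_mulVec (T := T) (ρ := ρ) (fun _ => 1) i
  simp only [mulVec, dotProduct, mul_one] at h
  rw [h]
  unfold ar1PrecDiag
  split_ifs <;> nlinarith

theorem ar1Prec_add_diagonal_apply_nonpos {k : Fin T → ℝ} (hρ : 0 ≤ ρ) (i j : Fin T)
    (hij : i ≠ j) : (ar1Prec T ρ + diagonal k) i j ≤ 0 := by
  rw [Matrix.add_apply, diagonal_apply_ne _ hij, add_zero]
  exact ar1Prec_apply_nonpos hρ hij

theorem ar1Prec_add_diagonal_rowSum_pos {k : Fin T → ℝ} (hρ0 : 0 ≤ ρ) (hρ1 : ρ ≤ 1)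
    (hk : ∀ i, 0 < k i) (i : Fin T) : 0 < ∑ j, (ar1Prec T ρ + diagonal k) i j := by
  simp only [Matrix.add_apply, sum_add_distrib, diagonal_apply, sum_ite_eq, mem_univ, if_true]
  exact add_pos_of_nonneg_of_pos (ar1Prec_rowSum_nonneg hρ0 hρ1 i) (hk i)

theorem det_ar1Prec_add_diagonal_ne_zero {k : Fin T → ℝ} (hρ0 : 0 ≤ ρ) (hρ1 : ρ ≤ 1)
    (hk : ∀ i, 0 < k i) : (ar1Prec T ρ + diagonal k).det ≠ 0 :=
  det_ne_zero_of_offDiag_nonpos_of_rowSum_pos (ar1Prec_add_diagonal_apply_nonpos hρ0)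
    (ar1Prec_add_diagonal_rowSum_pos hρ0 hρ1 hk)

theorem ar1Prec_add_diagonal_inv_mulVec_single_last_pos {n : ℕ} {k : Fin (n + 1) → ℝ}
    (hρ0 : 0 < ρ) (hρ1 : ρ ≤ 1) (hk : ∀ i, 0 < k i) (t : Fin (n + 1)) :
    0 < ((ar1Prec (n + 1) ρ + diagonal k)⁻¹ *ᵥ Pi.single (Fin.last n) 1) t := by
  set G := ar1Prec (n + 1) ρ + diagonal k
  set z := G⁻¹ *ᵥ Pi.single (Fin.last n) 1
  have hoff := ar1Prec_add_diagonal_apply_nonpos (k := k) hρ0.le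
  have hGz : G *ᵥ z = Pi.single (Fin.last n) 1 := by
    rw [mulVec_mulVec,
      mul_nonsing_inv _ (det_ar1Prec_add_diagonal_ne_zero hρ0.le hρ1 hk).isUnit, one_mulVec]
  have hz : 0 ≤ z := nonneg_of_nonneg_mulVec hoff
    (ar1Prec_add_diagonal_rowSum_pos hρ0.le hρ1 hk) (hGz ▸ Pi.single_nonneg.2 zero_le_one)
  induction t using Fin.reverseInduction with
  | last =>
    refine (hz _).lt_of_ne fun h0 => ?_
    have h := mulVec_apply_le_of_apply_eq_zero hoff hz h0.symm (Fin.last n)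
    rw [hGz, ← h0, Pi.zero_apply, mul_zero, Pi.single_eq_same] at h
    exact absurd h (by norm_num)
  | cast i ih =>
    refine (hz _).lt_of_ne fun h0 => ?_
    have h := mulVec_apply_le_of_apply_eq_zero hoff hz h0.symm i.succ
    rw [hGz, Pi.single_eq_of_ne (Fin.castSucc_lt_last i).ne, Matrix.add_apply,
      diagonal_apply_ne _ Fin.castSucc_lt_succ.ne, add_zero, ar1Prec_castSucc_succ] at h
    nlinarith

theorem ar1Corr_mul_ar1Prec_add_diagonal_mul_diagonal (σ : ℝ) {e : Fin T → ℝ}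
    (he : ∀ t, e t ≠ 0) :
    ar1Corr T ρ * (ar1Prec T ρ + diagonal fun t => σ ^ 2 * (1 - ρ ^ 2) / e t) * diagonal e
      = (1 - ρ ^ 2) • (diagonal e + σ ^ 2 • ar1Corr T ρ) := by
  have hk : (fun t => σ ^ 2 * (1 - ρ ^ 2) / e t * e t) = fun _ => σ ^ 2 * (1 - ρ ^ 2) :=
    funext fun t => div_mul_cancel₀ _ (he t)
  rw [mul_add, ar1Corr_mul_ar1Prec, add_mul, Matrix.mul_assoc, diagonal_mul_diagonal, hk,
    ← smul_one_eq_diagonal, smul_mul, Matrix.one_mul, Matrix.mul_smul, Matrix.mul_one, smul_add,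
    smul_smul, mul_comm]

theorem covMat_eq_diagonal_mul (σ : ℝ) (lam q : ℕ → ℝ)
    (hlam : ∀ t : Fin T, lam (t + 1) ≠ 0) :
    covMat T ρ σ lam q = diagonal (fun t : Fin T => lam (t + 1)) *
      (diagonal (fun t : Fin T => q (t + 1) / lam (t + 1) ^ 2) + σ ^ 2 • ar1Corr T ρ) *
      diagonal (fun t : Fin T => lam (t + 1)) := by
  ext i j
  rw [mul_diagonal, diagonal_mul]
  simp only [covMat, ar1Corr, of_apply, Matrix.add_apply, Matrix.smul_apply, diagonal_apply,
    smul_eq_mul]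
  split_ifs with h
  · subst h
    field_simp [hlam i]
    simp
  · simp only [zero_add]
    ring

theorem smul_covMat_eq (σ : ℝ) (lam q : ℕ → ℝ)
    (hlam : ∀ t : Fin T, lam (t + 1) ≠ 0) (hq : ∀ t : Fin T, q (t + 1) ≠ 0) :
    (1 - ρ ^ 2) • covMat T ρ σ lam q = diagonal (fun t : Fin T => lam (t + 1)) * ar1Corr T ρ *
      (ar1Prec T ρ +
        diagonal fun t : Fin T => σ ^ 2 * (1 - ρ ^ 2) / (q (t + 1) / lam (t + 1) ^ 2)) *
      diagonal (fun t : Fin T => q (t + 1) / lam (t + 1) ^ 2 * lam (t + 1)) := by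
  have he : ∀ t : Fin T, q (t + 1) / lam (t + 1) ^ 2 ≠ 0 :=
    fun t => div_ne_zero (hq t) (pow_ne_zero 2 (hlam t))
  rw [covMat_eq_diagonal_mul σ lam q hlam, ← smul_mul, ← Matrix.mul_smul,
    ← ar1Corr_mul_ar1Prec_add_diagonal_mul_diagonal σ he, ← diagonal_mul_diagonal]
  simp only [Matrix.mul_assoc]

theorem crossCov_eq_smul_mulVec_single_last (n : ℕ) (ρ σ : ℝ) (lam : ℕ → ℝ) :
    (fun s : Fin (n + 1) => σ ^ 2 * lam (s + 1) * lam (n + 1 + 1) * ρ ^ (n + 1 - s))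
      = (σ ^ 2 * lam (n + 1 + 1) * ρ) •
        ((diagonal (fun t : Fin (n + 1) => lam (t + 1)) * ar1Corr (n + 1) ρ) *ᵥ
          Pi.single (Fin.last n) 1) := by
  rw [← mulVec_mulVec, ar1Corr_mulVec_single_last]
  ext s
  rw [Pi.smul_apply, mulVec_diagonal, smul_eq_mul, show n + 1 - (s : ℕ) = n - s + 1 by omega,
    pow_succ]
  ring

end AR1

theorem stmt10_general (T : ℕ) (ρ : ℝ) (hρ1 : 0 < ρ) (hρ2 : ρ < 1)
    (σ : ℝ) (hσ : 0 < σ) (lam q : ℕ → ℝ)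
    (hlam : ∀ t, 1 ≤ t → t ≤ T + 1 → 0 < lam t)
    (hq : ∀ t, 1 ≤ t → t ≤ T → 0 < q t) :
    IsUnit (covMat T ρ σ lam q) ∧
    ∀ t : Fin T,
      0 < (covMat T ρ σ lam q)⁻¹.mulVec
          (fun s : Fin T =>
            σ ^ 2 * lam ((s : ℕ) + 1) * lam (T + 1) * ρ ^ (T - (s : ℕ))) t := by
  have hl : ∀ t : Fin T, 0 < lam (t + 1) := fun t => hlam _ (by omega) (by omega)
  have hq' : ∀ t : Fin T, 0 < q (t + 1) := fun t => hq _ (by omega) (by omega)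
  have hρ : 0 < 1 - ρ ^ 2 := by nlinarith
  have hk : ∀ t : Fin T, 0 < σ ^ 2 * (1 - ρ ^ 2) / (q (t + 1) / lam (t + 1) ^ 2) := fun t => by
    have := hl t; have := hq' t; positivity
  have hd : ∀ t : Fin T, 0 < q (t + 1) / lam (t + 1) ^ 2 * lam (t + 1) := fun t => by
    have := hl t; have := hq' t; positivity
  have hA : IsUnit (diagonal (fun t : Fin T => lam (t + 1)) * ar1Corr T ρ).det := by
    rw [det_mul, det_diagonal]
    exact (isUnit_iff_ne_zero.2 (prod_ne_zero_iff.2 fun t _ => (hl t).ne')).mul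
      (isUnit_det_ar1Corr (by nlinarith))
  have hG := (det_ar1Prec_add_diagonal_ne_zero hρ1.le hρ2.le hk).isUnit
  have hfac := smul_covMat_eq σ lam q (fun t => (hl t).ne') (fun t => (hq' t).ne') (ρ := ρ)
  refine ⟨(isUnit_iff_isUnit_det _).2 (isUnit_det_of_smul_eq_mul_mul_diagonal hA hG
    (fun t => (hd t).ne') hfac), fun t => ?_⟩
  obtain ⟨n, rfl⟩ : ∃ n, T = n + 1 := ⟨T - 1, by have := t.pos; omega⟩
  rw [crossCov_eq_smul_mulVec_single_last, mulVec_smul,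
    inv_mulVec_mulVec_eq_of_smul_eq_mul_mul_diagonal hρ.ne' hA hG (fun t => (hd t).ne') hfac]
  have hz := ar1Prec_add_diagonal_inv_mulVec_single_last_pos hρ1 hρ2.le hk t
  have hlast := hlam (n + 2) (by omega) le_rfl
  exact mul_pos (by positivity) (div_pos (mul_pos hρ hz) (hd t))

/-- regularity of the credibility premium.  For `ρ ∈ (0,1)`,
`Σ_T` is invertible and every coordinate of `Σ_T⁻¹c` is strictly positive,
where `c_t = σ²λ_tλ_{T+1}ρ^{T+1−t}`. -/
theorem stmt10 (T : ℕ) (hT : 2 ≤ T) (ρ : ℝ) (hρ1 : 0 < ρ) (hρ2 : ρ < 1)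
    (σ : ℝ) (hσ : 0 < σ) (lam q : ℕ → ℝ)
    (hlam : ∀ t, 1 ≤ t → t ≤ T + 1 → 0 < lam t)
    (hq : ∀ t, 1 ≤ t → t ≤ T → 0 < q t) :
    IsUnit (covMat T ρ σ lam q) ∧
    ∀ t : Fin T,
      0 < (covMat T ρ σ lam q)⁻¹.mulVec
          (fun s : Fin T =>
            σ ^ 2 * lam ((s : ℕ) + 1) * lam (T + 1) * ρ ^ (T - (s : ℕ))) t :=
  stmt10_general T ρ hρ1 hρ2 σ hσ lam q hlam hq
end

section
/- (Ordering of credibility factors under the AR(1) state-space model with time-invariant means.) Let T ≥ 2 be an integer, ρ ∈ [0,1), σ > 0, and let λ > 0, λ' > 0 and q > 0 be real numbers. Let Σ_T = q·I_T + σ²λ²·Σ_{T,ρ} and let c ∈ ℝ^T with c_t = σ²λλ'ρ^{T+1−t} for t = 1,…,T. Then Σ_T is invertible and the credibility factors α̂ = Σ_T^{−1}c satisfy α̂_1 ≤ α̂_2 ≤ … ≤ α̂_T; all these inequalities are equalities if ρ = 0, and all are strict if ρ ∈ (0,1). The same ordering holds for the standardized credibility factors α̂*_t = λ·α̂_t.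 -/
set_option maxHeartbeats 1000000


open Matrix

noncomputable def triP (T : ℕ) (ρ : ℝ) : Matrix (Fin T) (Fin T) ℝ :=
  Matrix.of fun i j =>
    (if i = j then (if (i : ℕ) = 0 ∨ (i : ℕ) = T - 1 then 1 else 1 + ρ ^ 2) else 0)
    + (if (i : ℕ) = (j : ℕ) + 1 then -ρ else 0) + (if (j : ℕ) = (i : ℕ) + 1 then -ρ else 0)

lemma triP_row (T : ℕ) (ρ : ℝ) (i : Fin T) (w : Fin T → ℝ) :
    ∑ j, triP T ρ i j * w j =
      (if (i : ℕ) = 0 ∨ (i : ℕ) = T - 1 then (1:ℝ) else 1 + ρ ^ 2) * w i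
      + (if h : 0 < (i : ℕ) then -ρ * w ⟨(i : ℕ) - 1, lt_of_le_of_lt (Nat.sub_le _ _) i.isLt⟩ else 0)
      + (if h : (i : ℕ) + 1 < T then -ρ * w ⟨(i : ℕ) + 1, h⟩ else 0) := by
  unfold triP
  simp only [Matrix.of_apply, add_mul]
  rw [Finset.sum_add_distrib, Finset.sum_add_distrib]
  congr 1
  · congr 1
    · rw [Finset.sum_eq_single i]
      · simp
      · intro j _ hj; simp [Ne.symm hj]
      · simp
    · by_cases h : 0 < (i : ℕ)
      · rw [dif_pos h, Finset.sum_eq_single (⟨(i : ℕ) - 1, lt_of_le_of_lt (Nat.sub_le _ _) i.isLt⟩ : Fin T)]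
        · rw [if_pos (by simp; omega)]
        · intro j _ hj
          rw [if_neg, zero_mul]
          intro hij
          apply hj
          apply Fin.ext
          simp
          omega
        · simp
      · rw [dif_neg h, Finset.sum_eq_zero]
        intro j _
        rw [if_neg (by omega), zero_mul]
  · by_cases h : (i : ℕ) + 1 < T
    · rw [dif_pos h, Finset.sum_eq_single (⟨(i : ℕ) + 1, h⟩ : Fin T)]
      · rw [if_pos (by simp)]
      · intro j _ hj
        rw [if_neg, zero_mul]
        intro hij
        apply hj; apply Fin.ext; simp [hij]
      · simp
    · rw [dif_neg h, Finset.sum_eq_zero]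
      intro j _
      rw [if_neg (by have := j.isLt; omega), zero_mul]

lemma triP_mul_sigma (T : ℕ) (hT : 2 ≤ T) (ρ : ℝ) :
    triP T ρ * sigmaMat T ρ = (1 - ρ ^ 2) • (1 : Matrix (Fin T) (Fin T) ℝ) := by
  ext i j
  rw [Matrix.mul_apply, triP_row T ρ i (fun k => sigmaMat T ρ k j)]
  simp only [sigmaMat, Matrix.of_apply, Matrix.smul_apply, Matrix.one_apply, smul_eq_mul]
  have hiT := i.isLt
  have hjT := j.isLt
  by_cases h0 : (i : ℕ) = 0
  · -- first row
    rw [if_pos (Or.inl h0), dif_neg (by omega), dif_pos (by omega)]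
    rcases eq_or_ne ((i:ℕ)) ((j:ℕ)) with he | hne
    · rw [if_pos (Fin.ext he)]
      have e1 : ((i:ℤ) - (j:ℤ)).natAbs = 0 := by omega
      have e2 : (((⟨(i:ℕ)+1, by omega⟩ : Fin T) : ℤ) - (j:ℤ)).natAbs = 1 := by simp; omega
      rw [e1, e2]; ring
    · rw [if_neg (by exact fun hc => hne (by exact congrArg Fin.val hc))]
      -- i = 0, j ≥ 1
      have hj1 : 1 ≤ (j:ℕ) := by omega
      have e1 : ((i:ℤ) - (j:ℤ)).natAbs = (j:ℕ) := by omega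
      have e2 : (((⟨(i:ℕ)+1, by omega⟩ : Fin T) : ℤ) - (j:ℤ)).natAbs = (j:ℕ) - 1 := by simp; omega
      rw [e1, e2]
      obtain ⟨k, hk⟩ : ∃ k, (j:ℕ) = k + 1 := ⟨(j:ℕ) - 1, by omega⟩
      rw [hk]
      simp only [Nat.add_sub_cancel]
      ring
  · by_cases hL : (i : ℕ) = T - 1
    · -- last row
      rw [if_pos (Or.inr hL), dif_pos (by omega), dif_neg (by omega)]
      rcases eq_or_ne ((i:ℕ)) ((j:ℕ)) with he | hne
      · rw [if_pos (Fin.ext he)]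
        have e1 : ((i:ℤ) - (j:ℤ)).natAbs = 0 := by omega
        have e2 : (((⟨(i:ℕ)-1, lt_of_le_of_lt (Nat.sub_le _ _) i.isLt⟩ : Fin T) : ℤ) - (j:ℤ)).natAbs = 1 := by simp; omega
        rw [e1, e2]; ring
      · rw [if_neg (by exact fun hc => hne (congrArg Fin.val hc))]
        have hj1 : (j:ℕ) < (i:ℕ) := by omega
        have e1 : ((i:ℤ) - (j:ℤ)).natAbs = (i:ℕ) - (j:ℕ) := by omega
        have e2 : (((⟨(i:ℕ)-1, lt_of_le_of_lt (Nat.sub_le _ _) i.isLt⟩ : Fin T) : ℤ) - (j:ℤ)).natAbs = (i:ℕ) - (j:ℕ) - 1 := by simp; omega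
        rw [e1, e2]
        obtain ⟨k, hk⟩ : ∃ k, (i:ℕ) - (j:ℕ) = k + 1 := ⟨(i:ℕ) - (j:ℕ) - 1, by omega⟩
        rw [hk]
        simp only [Nat.add_sub_cancel]
        ring
    · -- interior row
      rw [if_neg (by omega), dif_pos (by omega), dif_pos (by omega)]
      have e2 : (((⟨(i:ℕ)-1, lt_of_le_of_lt (Nat.sub_le _ _) i.isLt⟩ : Fin T) : ℤ) - (j:ℤ)) = (i:ℤ) - 1 - (j:ℤ) := by simp; omega
      have e3 : (((⟨(i:ℕ)+1, by omega⟩ : Fin T) : ℤ) - (j:ℤ)) = (i:ℤ) + 1 - (j:ℤ) := by simp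
      rw [e2, e3]
      rcases lt_trichotomy ((i:ℕ)) ((j:ℕ)) with hlt | he | hgt
      · rw [if_neg (by exact fun hc => absurd (congrArg Fin.val hc) (by omega))]
        have e1 : ((i:ℤ) - (j:ℤ)).natAbs = (j:ℕ) - (i:ℕ) := by omega
        have e4 : ((i:ℤ) - 1 - (j:ℤ)).natAbs = (j:ℕ) - (i:ℕ) + 1 := by omega
        have e5 : ((i:ℤ) + 1 - (j:ℤ)).natAbs = (j:ℕ) - (i:ℕ) - 1 := by omega
        rw [e1, e4, e5]
        obtain ⟨k, hk⟩ : ∃ k, (j:ℕ) - (i:ℕ) = k + 1 := ⟨(j:ℕ) - (i:ℕ) - 1, by omega⟩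
        rw [hk]
        simp only [Nat.add_sub_cancel]
        ring
      · rw [if_pos (Fin.ext he)]
        have e1 : ((i:ℤ) - (j:ℤ)).natAbs = 0 := by omega
        have e4 : ((i:ℤ) - 1 - (j:ℤ)).natAbs = 1 := by omega
        have e5 : ((i:ℤ) + 1 - (j:ℤ)).natAbs = 1 := by omega
        rw [e1, e4, e5]; ring
      · rw [if_neg (by exact fun hc => absurd (congrArg Fin.val hc) (by omega))]
        have e1 : ((i:ℤ) - (j:ℤ)).natAbs = (i:ℕ) - (j:ℕ) := by omega
        have e4 : ((i:ℤ) - 1 - (j:ℤ)).natAbs = (i:ℕ) - (j:ℕ) - 1 := by omega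
        have e5 : ((i:ℤ) + 1 - (j:ℤ)).natAbs = (i:ℕ) - (j:ℕ) + 1 := by omega
        rw [e1, e4, e5]
        obtain ⟨k, hk⟩ : ∃ k, (i:ℕ) - (j:ℕ) = k + 1 := ⟨(i:ℕ) - (j:ℕ) - 1, by omega⟩
        rw [hk]
        simp only [Nat.add_sub_cancel]
        ring

lemma det_ne_zero_aux (T : ℕ) (hT : 2 ≤ T) (ρ : ℝ) (hρ1 : 0 ≤ ρ) (hρ2 : ρ < 1)
    (q e : ℝ) (hq : 0 < q) (he : 0 ≤ e) :
    (q • triP T ρ + e • (1 : Matrix (Fin T) (Fin T) ℝ)).det ≠ 0 := by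
  apply det_ne_zero_of_sum_row_lt_diag
  intro k
  have hkT := k.isLt
  have hsum : ∑ j ∈ Finset.univ.erase k, ‖(q • triP T ρ + e • (1 : Matrix (Fin T) (Fin T) ℝ)) k j‖
      ≤ (if 0 < (k:ℕ) then q*ρ else 0) + (if (k:ℕ)+1 < T then q*ρ else 0) := by
    have hle : ∀ j ∈ Finset.univ.erase k,
        ‖(q • triP T ρ + e • (1 : Matrix (Fin T) (Fin T) ℝ)) k j‖ ≤
        (if (k:ℕ) = (j:ℕ) + 1 then q*ρ else 0) + (if (j:ℕ) = (k:ℕ) + 1 then q*ρ else 0) := by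
      intro j hj
      have hjk : j ≠ k := (Finset.mem_erase.mp hj).1
      have hkj : ¬ (k = j) := fun h => hjk h.symm
      simp only [Matrix.add_apply, Matrix.smul_apply, Matrix.one_apply, triP, Matrix.of_apply,
        if_neg hkj, if_neg hjk, smul_eq_mul, mul_zero, add_zero, zero_add]
      by_cases h1 : (k:ℕ) = (j:ℕ) + 1
      · have h2 : ¬ ((j:ℕ) = (k:ℕ) + 1) := by omega
        rw [if_pos h1, if_pos h1, if_neg h2, if_neg h2]
        simp [abs_of_nonneg, hρ1, abs_mul, abs_of_pos hq, abs_of_nonneg hρ1]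
      · rw [if_neg h1, if_neg h1, zero_add]
        by_cases h2 : (j:ℕ) = (k:ℕ) + 1
        · rw [if_pos h2, if_pos h2]
          simp [abs_mul, abs_of_pos hq, abs_of_nonneg hρ1]
        · rw [if_neg h2, if_neg h2]
          simp
    refine le_trans (Finset.sum_le_sum hle) ?_
    rw [Finset.sum_add_distrib]
    gcongr
    · by_cases h : 0 < (k:ℕ)
      · rw [if_pos h, Finset.sum_eq_single (⟨(k:ℕ)-1, by omega⟩ : Fin T)]
        · rw [if_pos (by simp; omega)]
        · intro j _ hj; rw [if_neg (fun hc => hj (Fin.ext (by simp; omega)))]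
        · intro hmem
          exfalso; apply hmem
          simp [Finset.mem_erase]
          exact fun hc => absurd (congrArg Fin.val hc) (by simp; omega)
      · rw [if_neg h, Finset.sum_eq_zero]
        intro j _; rw [if_neg (by omega)]
    · by_cases h : (k:ℕ)+1 < T
      · rw [if_pos h, Finset.sum_eq_single (⟨(k:ℕ)+1, h⟩ : Fin T)]
        · rw [if_pos (by simp)]
        · intro j _ hj; rw [if_neg (fun hc => hj (Fin.ext (by simpa using hc)))]
        · intro hmem
          exfalso; apply hmem
          simp [Finset.mem_erase]
          exact fun hc => absurd (congrArg Fin.val hc) (by simp)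
      · rw [if_neg h, Finset.sum_eq_zero]
        intro j _; rw [if_neg (by have := j.isLt; omega)]
  refine lt_of_le_of_lt hsum ?_
  have hdiag : (q • triP T ρ + e • (1 : Matrix (Fin T) (Fin T) ℝ)) k k
      = q * (if (k:ℕ) = 0 ∨ (k:ℕ) = T - 1 then 1 else 1 + ρ^2) + e := by
    simp only [Matrix.add_apply, Matrix.smul_apply, Matrix.one_apply_eq, smul_eq_mul, mul_one,
      triP, Matrix.of_apply, if_pos (rfl : k = k)]
    simp
  rw [hdiag, Real.norm_eq_abs, abs_of_pos (by split <;> nlinarith)]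
  by_cases h0 : (k:ℕ) = 0
  · have e1 : (if (k:ℕ) = 0 ∨ (k:ℕ) = T-1 then (1:ℝ) else 1+ρ^2) = 1 := if_pos (Or.inl h0)
    have e2 : (if 0 < (k:ℕ) then q*ρ else 0) = 0 := if_neg (by omega)
    have e3 : (if (k:ℕ)+1 < T then q*ρ else 0) = q*ρ := if_pos (by omega)
    rw [e1, e2, e3]; nlinarith
  · by_cases hL : (k:ℕ) = T - 1
    · have e1 : (if (k:ℕ) = 0 ∨ (k:ℕ) = T-1 then (1:ℝ) else 1+ρ^2) = 1 := if_pos (Or.inr hL)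
      have e2 : (if 0 < (k:ℕ) then q*ρ else 0) = q*ρ := if_pos (by omega)
      have e3 : (if (k:ℕ)+1 < T then q*ρ else 0) = 0 := if_neg (by omega)
      rw [e1, e2, e3]; nlinarith
    · have e1 : (if (k:ℕ) = 0 ∨ (k:ℕ) = T-1 then (1:ℝ) else 1+ρ^2) = 1+ρ^2 :=
        if_neg (by push_neg; exact ⟨h0, hL⟩)
      have e2 : (if 0 < (k:ℕ) then q*ρ else 0) = q*ρ := if_pos (by omega)
      have e3 : (if (k:ℕ)+1 < T then q*ρ else 0) = q*ρ := if_pos (by omega)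
      have h1ρ : 0 < (1-ρ)^2 := pow_pos (by linarith) 2
      rw [e1, e2, e3]; nlinarith [mul_pos hq h1ρ]

lemma root_facts (ρ a q : ℝ) (hρ : 0 < ρ) (hρ2 : ρ < 1) (ha : 0 < a) (hq : 0 < q) :
    ∃ r : ℝ, 0 < r ∧ r < ρ ∧
      q*ρ*r^2 - (q*(1+ρ^2) + a*(1-ρ^2))*r + q*ρ = 0 := by
  set D := q*(1+ρ^2) + a*(1-ρ^2) with hDdef
  have hρ21 : 0 < 1 - ρ^2 := by nlinarith
  have h2qρ : 0 < 2*q*ρ := by positivity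
  have hD2 : 2*q*ρ < D := by
    rw [hDdef]; nlinarith [mul_pos hq (pow_pos (by linarith : (0:ℝ) < 1-ρ) 2), mul_pos ha hρ21]
  have hDpos : 0 < D := by linarith
  set s := Real.sqrt (D^2 - (2*q*ρ)^2) with hsdef
  have hs2 : s^2 = D^2 - (2*q*ρ)^2 := Real.sq_sqrt (by nlinarith)
  have hs0 : 0 ≤ s := Real.sqrt_nonneg _
  have hsD : s < D := by nlinarith
  set r := (D - s)/(2*q*ρ) with hrdef
  have hr0 : 0 < r := div_pos (by linarith) h2qρ
  have hchar : q*ρ*r^2 - D*r + q*ρ = 0 := by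
    rw [hrdef]; field_simp; nlinarith [hs2]
  have hr2q : 2*q*ρ*r = D - s := by rw [hrdef]; field_simp
  have hrle : 2*q*ρ*r ≤ D := by linarith
  have hpρ : q*ρ*ρ^2 - D*ρ + q*ρ < 0 := by
    have : q*ρ*ρ^2 - D*ρ + q*ρ = -(a*ρ*(1-ρ^2)) := by rw [hDdef]; ring
    rw [this]
    have := mul_pos (mul_pos ha hρ) hρ21
    linarith
  have hrρ : r < ρ := by
    by_contra hcon
    push_neg at hcon
    have h1 : q*ρ*(r+ρ) < D := by nlinarith
    have h2 : (r - ρ)*(q*ρ*(r+ρ) - D) ≤ 0 :=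
      mul_nonpos_of_nonneg_of_nonpos (by linarith) (by linarith)
    nlinarith [hpρ, hchar, h2]
  exact ⟨r, hr0, hrρ, hchar⟩

lemma seq_facts (ρ a q : ℝ) (hρ : 0 < ρ) (hρ2 : ρ < 1) (ha : 0 < a) (hq : 0 < q) :
    ∃ f : ℕ → ℝ, StrictMono f ∧ (∀ n, 0 < f n) ∧
      ((q + a*(1-ρ^2)) * f 0 = q*ρ * f 1) ∧
      (∀ m, (q*(1+ρ^2)+a*(1-ρ^2)) * f (m+1) = q*ρ*(f m + f (m+2))) := by
  obtain ⟨r, hr0, hrρ, hchar⟩ := root_facts ρ a q hρ hρ2 ha hq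
  have hρ21 : 0 < 1 - ρ^2 := by nlinarith
  have hr1 : r < 1 := by linarith
  set ri := r⁻¹ with hridef
  have hri0 : 0 < ri := inv_pos.mpr hr0
  have hri : r * ri = 1 := mul_inv_cancel₀ hr0.ne'
  have hri1 : 1 < ri := by nlinarith [mul_lt_mul_of_pos_right hr1 hri0]
  set D := q*(1+ρ^2) + a*(1-ρ^2) with hDdef
  set U := q + a*(1-ρ^2) - q*ρ*r with hUdef
  set V := q*ρ*(r-ρ) with hVdef
  have hU : 0 < U := by
    have : ρ*r < 1 := by nlinarith
    rw [hUdef]; nlinarith [mul_pos ha hρ21]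
  have hV : V < 0 := by
    rw [hVdef]
    exact mul_neg_of_pos_of_neg (by positivity) (by linarith)
  have hUVrpos : 0 < U + V*r := by
    have hUVr : U + V*r = (1+r)*(q*(1-ρ)+a*(1-ρ^2)) := by
      rw [hUdef, hVdef]; linear_combination hchar
    rw [hUVr]
    have : 0 < q*(1-ρ)+a*(1-ρ^2) := by nlinarith [mul_pos ha hρ21]
    positivity
  refine ⟨fun n => U * ri^n - V * r^n, ?_, ?_, ?_, ?_⟩
  · apply strictMono_nat_of_lt_succ
    intro n
    show U * ri^n - V * r^n < U * ri^(n+1) - V * r^(n+1)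
    have hpn : 1 ≤ ri^n := one_le_pow₀ hri1.le
    have hpn' : r^n ≤ 1 := pow_le_one₀ hr0.le hr1.le
    have key : U*(ri-1) + V*(1-r) = (1-r)*ri*(U+V*r) := by
      linear_combination (U - V + V*r)*hri
    have t1 : U*(ri-1) ≤ U*ri^n*(ri-1) := by
      nlinarith [mul_nonneg (mul_nonneg (sub_nonneg.mpr hpn) hU.le) (sub_nonneg.mpr hri1.le)]
    have t2 : V*(1-r) ≤ V*r^n*(1-r) := by
      nlinarith [mul_nonneg (mul_nonneg (sub_nonneg.mpr hpn') (neg_nonneg.mpr hV.le))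
        (by linarith : (0:ℝ) ≤ 1-r)]
    have t3 : 0 < (1-r)*ri*(U+V*r) := mul_pos (mul_pos (by linarith) hri0) hUVrpos
    have hdiff : U * ri^(n+1) - V * r^(n+1) - (U * ri^n - V * r^n)
        = U*ri^n*(ri-1) + V*r^n*(1-r) := by ring
    linarith [hdiff, t1, t2, t3, key]
  · intro n
    show 0 < U * ri^n - V * r^n
    have h1 : 0 < U * ri^n := mul_pos hU (pow_pos hri0 n)
    have h2 : 0 < -(V * r^n) := by
      rw [neg_pos]; exact mul_neg_of_neg_of_pos hV (pow_pos hr0 n)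
    linarith
  · show (q + a*(1-ρ^2)) * (U * ri^0 - V * r^0) = q*ρ * (U * ri^1 - V * r^1)
    apply mul_left_cancel₀ hr0.ne'
    rw [pow_zero, pow_zero, pow_one, pow_one]
    linear_combination (q*ρ*r - (q + a*(1-ρ^2)))*hchar + (-(q*ρ*U))*hri
  · intro m
    show D * (U * ri^(m+1) - V * r^(m+1)) = q*ρ*((U * ri^m - V * r^m) + (U * ri^(m+2) - V * r^(m+2)))
    have base1 : D * (U * ri) = q*ρ*(U + U*ri^2) := by
      apply mul_left_cancel₀ (pow_ne_zero 2 hr0.ne')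
      linear_combination (-U)*hchar + (D*U*r - q*ρ*U*(r*ri+1))*hri
    have base2 : D * (V * r) = q*ρ*(V + V*r^2) := by
      linear_combination (-V)*hchar
    have comp1 : D * (U * ri^(m+1)) = q*ρ*(U*ri^m + U*ri^(m+2)) := by
      calc D * (U * ri^(m+1)) = (D * (U * ri)) * ri^m := by ring
      _ = (q*ρ*(U + U*ri^2)) * ri^m := by rw [base1]
      _ = q*ρ*(U*ri^m + U*ri^(m+2)) := by ring
    have comp2 : D * (V * r^(m+1)) = q*ρ*(V*r^m + V*r^(m+2)) := by
      calc D * (V * r^(m+1)) = (D * (V * r)) * r^m := by ring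
      _ = (q*ρ*(V + V*r^2)) * r^m := by rw [base2]
      _ = q*ρ*(V*r^m + V*r^(m+2)) := by ring
    linear_combination comp1 - comp2

lemma stmt11_core (T : ℕ) (hT : 2 ≤ T) (ρ : ℝ) (hρ : 0 < ρ) (hρ2 : ρ < 1)
    (a b q : ℝ) (ha : 0 < a) (hb : 0 < b) (hq : 0 < q) :
    IsUnit (q • (1 : Matrix (Fin T) (Fin T) ℝ) + a • sigmaMat T ρ) ∧
    ∃ g : Fin T → ℝ,
      (q • (1 : Matrix (Fin T) (Fin T) ℝ) + a • sigmaMat T ρ)⁻¹.mulVec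
          (fun i : Fin T => b * ρ ^ (T - (i : ℕ))) = g ∧
      (∀ s t : Fin T, (s:ℕ) < (t:ℕ) → g s < g t) := by
  have hρ21 : 0 < 1 - ρ^2 := by nlinarith
  obtain ⟨f, hfmono, hfpos, hrow0, hrec⟩ := seq_facts ρ a q hρ hρ2 ha hq
  set Sm : Matrix (Fin T) (Fin T) ℝ := q • 1 + a • sigmaMat T ρ with hSm
  set M : Matrix (Fin T) (Fin T) ℝ := q • triP T ρ + (a*(1-ρ^2)) • 1 with hM
  have hPS : triP T ρ * Sm = M := by
    rw [hSm, hM, Matrix.mul_add, Matrix.mul_smul, Matrix.mul_one, Matrix.mul_smul,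
      triP_mul_sigma T hT ρ, smul_smul]
  have hMdet : M.det ≠ 0 := det_ne_zero_aux T hT ρ hρ.le hρ2 q (a*(1-ρ^2)) hq (by positivity)
  have hPdet : (triP T ρ).det ≠ 0 := by
    have h := det_ne_zero_aux T hT ρ hρ.le hρ2 1 0 one_pos le_rfl
    simpa using h
  have hSdet : Sm.det ≠ 0 := by
    intro h
    apply hMdet
    rw [← hPS, Matrix.det_mul, h, mul_zero]
  have hSunit : IsUnit Sm := (Matrix.isUnit_iff_isUnit_det _).mpr (isUnit_iff_ne_zero.mpr hSdet)
  have hC : 0 < q*ρ*(f T - ρ * f (T-1)) := by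
    have h1 : f (T-1) < f T := hfmono (by omega)
    have h2 : 0 < f (T-1) := hfpos _
    have : 0 < f T - ρ * f (T-1) := by nlinarith
    positivity
  set Cv := q*ρ*(f T - ρ * f (T-1)) with hCv
  set sc := (b*ρ*(1-ρ^2))/Cv with hsc
  have hscpos : 0 < sc := div_pos (by positivity) hC
  set g : Fin T → ℝ := fun i => sc * f (i:ℕ) with hg
  have hfrec' : ∀ i : Fin T, 0 < (i:ℕ) → (i:ℕ) < T - 1 →
      (q*(1+ρ^2)+a*(1-ρ^2)) * f (i:ℕ) = q*ρ*(f ((i:ℕ)-1) + f ((i:ℕ)+1)) := by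
    intro i h1 h2
    obtain ⟨m, hm⟩ : ∃ m, (i:ℕ) = m + 1 := ⟨(i:ℕ)-1, by omega⟩
    rw [hm]
    simpa using hrec m
  have hMg : M.mulVec g = fun i : Fin T => if (i:ℕ) = T-1 then b*ρ*(1-ρ^2) else 0 := by
    funext i
    have hiT := i.isLt
    rw [hM, Matrix.add_mulVec, Matrix.smul_mulVec, Matrix.smul_mulVec,
      Matrix.one_mulVec]
    simp only [Pi.add_apply, Pi.smul_apply, smul_eq_mul]
    have hrow : (triP T ρ).mulVec g i = ∑ j, triP T ρ i j * g j := rfl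
    rw [hrow, triP_row T ρ i g]
    by_cases h0 : (i:ℕ) = 0
    · rw [if_pos (Or.inl h0), dif_neg (show ¬(0 < (i:ℕ)) by omega),
        dif_pos (show (i:ℕ)+1 < T by omega), if_neg (show ¬((i:ℕ) = T-1) by omega)]
      have e1 : g i = sc * f 0 := by rw [hg]; simp [h0]
      have e2 : g ⟨(i:ℕ)+1, show (i:ℕ)+1 < T by omega⟩ = sc * f 1 := by rw [hg]; simp [h0]
      rw [e1, e2]
      nlinarith [hrow0]
    · by_cases hL : (i:ℕ) = T - 1
      · rw [if_pos (Or.inr hL), dif_pos (show 0 < (i:ℕ) by omega),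
          dif_neg (show ¬((i:ℕ)+1 < T) by omega), if_pos hL]
        have e1 : g i = sc * f (i:ℕ) := rfl
        have e2 : g ⟨(i:ℕ)-1, lt_of_le_of_lt (Nat.sub_le _ _) i.isLt⟩ = sc * f ((i:ℕ)-1) := rfl
        rw [e1, e2, show ((i:ℕ)) = T-1 from hL, show T-1-1 = T-2 by omega]
        have hr := hrec (T-2)
        have eA : T - 2 + 1 = T - 1 := by omega
        have eB : T - 2 + 2 = T := by omega
        rw [eA, eB] at hr
        have hscCv : sc * Cv = b*ρ*(1-ρ^2) := by
          rw [hsc]; exact div_mul_cancel₀ _ hC.ne'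
        rw [hCv] at hscCv
        nlinarith [hr, hscCv]
      · rw [if_neg (show ¬((i:ℕ) = 0 ∨ (i:ℕ) = T-1) by push_neg; exact ⟨h0, hL⟩),
          dif_pos (show 0 < (i:ℕ) by omega), dif_pos (show (i:ℕ)+1 < T by omega),
          if_neg hL]
        have e1 : g i = sc * f (i:ℕ) := rfl
        have e2 : g ⟨(i:ℕ)-1, lt_of_le_of_lt (Nat.sub_le _ _) i.isLt⟩ = sc * f ((i:ℕ)-1) := rfl
        have e3 : g ⟨(i:ℕ)+1, show (i:ℕ)+1 < T by omega⟩ = sc * f ((i:ℕ)+1) := rfl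
        rw [e1, e2, e3]
        have hr := hfrec' i (by omega) (by omega)
        nlinarith [hr]
  have hPc : (triP T ρ).mulVec (fun i : Fin T => b * ρ ^ (T - (i : ℕ)))
      = fun i : Fin T => if (i:ℕ) = T-1 then b*ρ*(1-ρ^2) else 0 := by
    funext i
    have hiT := i.isLt
    have hrow : (triP T ρ).mulVec (fun i : Fin T => b * ρ ^ (T - (i : ℕ))) i
        = ∑ j, triP T ρ i j * (b * ρ ^ (T - (j : ℕ))) := rfl
    rw [hrow, triP_row T ρ i (fun j : Fin T => b * ρ ^ (T - (j : ℕ)))]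
    by_cases h0 : (i:ℕ) = 0
    · rw [if_pos (Or.inl h0), dif_neg (show ¬(0 < (i:ℕ)) by omega),
        dif_pos (show (i:ℕ)+1 < T by omega), if_neg (show ¬((i:ℕ) = T-1) by omega)]
      simp only [h0]
      have e1 : T - 0 = (T - 1) + 1 := by omega
      have e2 : T - (0+1) = T - 1 := by omega
      rw [e1, e2]
      ring
    · by_cases hL : (i:ℕ) = T - 1
      · rw [if_pos (Or.inr hL), dif_pos (show 0 < (i:ℕ) by omega),
          dif_neg (show ¬((i:ℕ)+1 < T) by omega), if_pos hL]
        simp only [hL]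
        have e1 : T - (T-1) = 1 := by omega
        have e2 : T - (T-1-1) = 2 := by omega
        rw [e1, e2]
        ring
      · rw [if_neg (show ¬((i:ℕ) = 0 ∨ (i:ℕ) = T-1) by push_neg; exact ⟨h0, hL⟩),
          dif_pos (show 0 < (i:ℕ) by omega), dif_pos (show (i:ℕ)+1 < T by omega),
          if_neg hL]
        obtain ⟨K, hK⟩ : ∃ K, T - (i:ℕ) = K + 1 := ⟨T - (i:ℕ) - 1, by omega⟩
        have e2 : T - ((i:ℕ)-1) = K + 2 := by omega
        have e3 : T - ((i:ℕ)+1) = K := by omega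
        rw [hK, e2, e3]
        ring
  have hSg : Sm.mulVec g = (fun i : Fin T => b * ρ ^ (T - (i : ℕ))) := by
    have h1 : (triP T ρ).mulVec (Sm.mulVec g)
        = (triP T ρ).mulVec (fun i : Fin T => b * ρ ^ (T - (i : ℕ))) := by
      rw [Matrix.mulVec_mulVec, hPS, hMg, hPc]
    have hPinv : (triP T ρ)⁻¹ * triP T ρ = 1 :=
      Matrix.nonsing_inv_mul _ (isUnit_iff_ne_zero.mpr hPdet)
    have h2 := congrArg ((triP T ρ)⁻¹.mulVec ·) h1
    simpa [Matrix.mulVec_mulVec, ← Matrix.mul_assoc, hPinv, Matrix.one_mulVec] using h2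
  have hinv : Sm⁻¹.mulVec (fun i : Fin T => b * ρ ^ (T - (i : ℕ))) = g := by
    rw [← hSg, Matrix.mulVec_mulVec, Matrix.nonsing_inv_mul _ (isUnit_iff_ne_zero.mpr hSdet),
      Matrix.one_mulVec]
  exact ⟨hSunit, g, hinv, fun s t hst => by
    have := hfmono hst
    exact mul_lt_mul_of_pos_left this hscpos⟩

/-- ordering of credibility factors under the AR(1) state-space
model with time-invariant means.  With `Σ_T = q·I + σ²λ²·Σ_{T,ρ}` and
`c_t = σ²λλ'ρ^{T+1−t}`, the matrix `Σ_T` is invertible, the credibility factors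
`α̂ = Σ_T⁻¹c` are nondecreasing, all equal when `ρ = 0`, strictly increasing
when `ρ ∈ (0,1)`, and the standardized factors `α̂*_t = λ·α̂_t` are ordered in
the same way. -/
theorem stmt11 (T : ℕ) (hT : 2 ≤ T) (ρ : ℝ) (hρ1 : 0 ≤ ρ) (hρ2 : ρ < 1)
    (σ lam lam' q : ℝ) (hσ : 0 < σ) (hlam : 0 < lam) (hlam' : 0 < lam')
    (hq : 0 < q) :
    IsUnit (q • (1 : Matrix (Fin T) (Fin T) ℝ) + (σ ^ 2 * lam ^ 2) • sigmaMat T ρ) ∧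
    (∀ s t : Fin T, s ≤ t →
      (q • (1 : Matrix (Fin T) (Fin T) ℝ) + (σ ^ 2 * lam ^ 2) • sigmaMat T ρ)⁻¹.mulVec
          (fun i : Fin T => σ ^ 2 * lam * lam' * ρ ^ (T - (i : ℕ))) s ≤
        (q • (1 : Matrix (Fin T) (Fin T) ℝ) + (σ ^ 2 * lam ^ 2) • sigmaMat T ρ)⁻¹.mulVec
          (fun i : Fin T => σ ^ 2 * lam * lam' * ρ ^ (T - (i : ℕ))) t) ∧
    (ρ = 0 → ∀ s t : Fin T,
      (q • (1 : Matrix (Fin T) (Fin T) ℝ) + (σ ^ 2 * lam ^ 2) • sigmaMat T ρ)⁻¹.mulVec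
          (fun i : Fin T => σ ^ 2 * lam * lam' * ρ ^ (T - (i : ℕ))) s =
        (q • (1 : Matrix (Fin T) (Fin T) ℝ) + (σ ^ 2 * lam ^ 2) • sigmaMat T ρ)⁻¹.mulVec
          (fun i : Fin T => σ ^ 2 * lam * lam' * ρ ^ (T - (i : ℕ))) t) ∧
    (0 < ρ → ∀ s t : Fin T, s < t →
      (q • (1 : Matrix (Fin T) (Fin T) ℝ) + (σ ^ 2 * lam ^ 2) • sigmaMat T ρ)⁻¹.mulVec
          (fun i : Fin T => σ ^ 2 * lam * lam' * ρ ^ (T - (i : ℕ))) s <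
        (q • (1 : Matrix (Fin T) (Fin T) ℝ) + (σ ^ 2 * lam ^ 2) • sigmaMat T ρ)⁻¹.mulVec
          (fun i : Fin T => σ ^ 2 * lam * lam' * ρ ^ (T - (i : ℕ))) t) ∧
    (∀ s t : Fin T, s ≤ t →
      lam * (q • (1 : Matrix (Fin T) (Fin T) ℝ) + (σ ^ 2 * lam ^ 2) • sigmaMat T ρ)⁻¹.mulVec
          (fun i : Fin T => σ ^ 2 * lam * lam' * ρ ^ (T - (i : ℕ))) s ≤
        lam * (q • (1 : Matrix (Fin T) (Fin T) ℝ) + (σ ^ 2 * lam ^ 2) • sigmaMat T ρ)⁻¹.mulVec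
          (fun i : Fin T => σ ^ 2 * lam * lam' * ρ ^ (T - (i : ℕ))) t) ∧
    (ρ = 0 → ∀ s t : Fin T,
      lam * (q • (1 : Matrix (Fin T) (Fin T) ℝ) + (σ ^ 2 * lam ^ 2) • sigmaMat T ρ)⁻¹.mulVec
          (fun i : Fin T => σ ^ 2 * lam * lam' * ρ ^ (T - (i : ℕ))) s =
        lam * (q • (1 : Matrix (Fin T) (Fin T) ℝ) + (σ ^ 2 * lam ^ 2) • sigmaMat T ρ)⁻¹.mulVec
          (fun i : Fin T => σ ^ 2 * lam * lam' * ρ ^ (T - (i : ℕ))) t) ∧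
    (0 < ρ → ∀ s t : Fin T, s < t →
      lam * (q • (1 : Matrix (Fin T) (Fin T) ℝ) + (σ ^ 2 * lam ^ 2) • sigmaMat T ρ)⁻¹.mulVec
          (fun i : Fin T => σ ^ 2 * lam * lam' * ρ ^ (T - (i : ℕ))) s <
        lam * (q • (1 : Matrix (Fin T) (Fin T) ℝ) + (σ ^ 2 * lam ^ 2) • sigmaMat T ρ)⁻¹.mulVec
          (fun i : Fin T => σ ^ 2 * lam * lam' * ρ ^ (T - (i : ℕ))) t) := by
  rcases hρ1.lt_or_eq with hρpos | hρ0
  · -- 0 < ρ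
    have ha : 0 < σ^2*lam^2 := by positivity
    have hb : 0 < σ^2*lam*lam' := by positivity
    obtain ⟨hunit, g, hg, hmono⟩ :=
      stmt11_core T hT ρ hρpos hρ2 (σ^2*lam^2) (σ^2*lam*lam') q ha hb hq
    rw [hg]
    have hle : ∀ s t : Fin T, s ≤ t → g s ≤ g t := by
      intro s t hst
      rcases eq_or_lt_of_le hst with h | h
      · rw [h]
      · exact (hmono s t h).le
    refine ⟨hunit, hle, ?_, ?_, ?_, ?_, ?_⟩
    · intro h; exact absurd h (ne_of_gt hρpos)
    · intro _ s t hst; exact hmono s t hst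
    · intro s t hst; exact mul_le_mul_of_nonneg_left (hle s t hst) hlam.le
    · intro h; exact absurd h (ne_of_gt hρpos)
    · intro _ s t hst; exact mul_lt_mul_of_pos_left (hmono s t hst) hlam
  · -- ρ = 0
    subst hρ0
    have hsig : sigmaMat T 0 = 1 := by
      ext i j
      simp only [sigmaMat, Matrix.of_apply, Matrix.one_apply]
      by_cases h : i = j
      · subst h; simp
      · rw [if_neg h]
        have hv : (i:ℕ) ≠ (j:ℕ) := fun hc => h (Fin.ext hc)
        have : ((i:ℤ) - (j:ℤ)).natAbs ≠ 0 := by omega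
        exact zero_pow this
    have hc : (fun i : Fin T => σ^2*lam*lam'*(0:ℝ)^(T-(i:ℕ))) = (0 : Fin T → ℝ) := by
      funext i
      have : T - (i:ℕ) ≠ 0 := by have := i.isLt; omega
      simp [zero_pow this]
    rw [hc, hsig, ← add_smul]
    have hunit : IsUnit ((q + σ^2*lam^2) • (1 : Matrix (Fin T) (Fin T) ℝ)) := by
      rw [Matrix.isUnit_iff_isUnit_det]
      simp only [Matrix.det_smul, Matrix.det_one, mul_one]
      exact (isUnit_iff_ne_zero.mpr (pow_ne_zero _ (by positivity)))
    simp only [Matrix.mulVec_zero, Pi.zero_apply, mul_zero]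
    exact ⟨hunit, fun _ _ _ => le_rfl, fun _ _ _ => trivial, fun h => absurd h (lt_irrefl 0),
      fun _ _ _ => le_rfl, fun _ _ _ => trivial, fun h => absurd h (lt_irrefl 0)⟩
end

section
/- (Ordering of standardized credibility factors in the dynamic gamma-gamma model, arbitrary means.) Let T ≥ 2 be an integer, ρ ∈ [0,1), σ > 0, ψ > 0, and let λ_1,…,λ_T, λ_{T+1} > 0 be real numbers. Let Σ_T be the T×T matrix with [Σ_T]_{t,t} = ψ(1+σ²)λ_t² + σ²λ_t² and [Σ_T]_{s,t} = σ²λ_sλ_t ρ^{|s−t|} for s ≠ t, and let c ∈ ℝ^T with c_t = σ²λ_tλ_{T+1}ρ^{T+1−t}. Then Σ_T is invertible and the standardized credibility factors α̂*_t = λ_t·(Σ_T^{−1}c)_t satisfy α̂*_1 ≤ α̂*_2 ≤ … ≤ α̂*_T, with strict inequalities whenever ρ ∈ (0,1). -/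
open Matrix

/-- The "standardized" matrix -/
noncomputable def Lmat (T : ℕ) (ρ a s2 : ℝ) : Matrix (Fin T) (Fin T) ℝ :=
  Matrix.of fun i j =>
    if i = j then a + s2 else s2 * ρ ^ (Int.natAbs ((i : ℤ) - (j : ℤ)))


lemma core_mono (T : ℕ) (ρ a c : ℝ) (hρ0 : 0 < ρ) (hρ1 : ρ < 1) (ha : 0 < a)
    (hc : 0 < c) (y : ℕ → ℝ)
    (hB0 : (a + c) * y 0 = a * ρ * y 1)
    (hRec : ∀ n, n + 2 < T →
      (a * (1 + ρ ^ 2) + c) * y (n + 1) = a * ρ * (y n + y (n + 2)))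
    (hy0 : 0 < y 0) :
    ∀ n, n + 1 < T → 0 < y n ∧ y n < y (n + 1) := by
  intro n
  induction n with
  | zero =>
    intro _
    refine ⟨hy0, ?_⟩
    nlinarith [mul_pos ha hρ0, mul_pos (add_pos (mul_pos ha (sub_pos.2 hρ1)) hc) hy0]
  | succ n ih =>
    intro h2
    obtain ⟨hpos, hlt⟩ := ih (by omega)
    have hpos1 : 0 < y (n + 1) := hpos.trans hlt
    refine ⟨hpos1, ?_⟩
    have hrec := hRec n h2
    have key : 0 < (a * (1 - ρ) ^ 2 + c) * y (n + 1) := by positivity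
    nlinarith [mul_pos (mul_pos ha hρ0) (sub_pos.2 hlt), mul_pos ha hρ0]

lemma core_pos (T : ℕ) (ρ a c : ℝ) (hρ0 : 0 < ρ) (hρ1 : ρ < 1) (ha : 0 < a)
    (hc : 0 < c) (y : ℕ → ℝ)
    (hB0 : (a + c) * y 0 = a * ρ * y 1)
    (hRec : ∀ n, n + 2 < T →
      (a * (1 + ρ ^ 2) + c) * y (n + 1) = a * ρ * (y n + y (n + 2)))
    (hy0 : 0 < y 0) :
    ∀ n, n < T → 0 < y n := by
  intro n hn
  rcases n with _ | m
  · exact hy0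
  · have h := core_mono T ρ a c hρ0 hρ1 ha hc y hB0 hRec hy0 m (by omega)
    exact h.1.trans h.2

lemma core_chain (T : ℕ) (y : ℕ → ℝ)
    (hmono : ∀ n, n + 1 < T → y n < y (n + 1)) :
    ∀ m k, m < k → k < T → y m < y k := by
  intro m k
  induction k with
  | zero => omega
  | succ k ih =>
    intro hmk hkT
    have hk : y k < y (k + 1) := hmono k hkT
    rcases Nat.lt_or_ge m k with h | h
    · exact (ih h (by omega)).trans hk
    · have : m = k := by omega
      subst this; exact hk

lemma core_zero (T : ℕ) (ρ a c : ℝ) (hρ0 : 0 < ρ) (ha : 0 < a)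
    (y : ℕ → ℝ)
    (hB0 : (a + c) * y 0 = a * ρ * y 1)
    (hRec : ∀ n, n + 2 < T →
      (a * (1 + ρ ^ 2) + c) * y (n + 1) = a * ρ * (y n + y (n + 2)))
    (hout : ∀ n, T ≤ n → y n = 0)
    (hy0 : y 0 = 0) :
    ∀ n, y n = 0 := by
  have haρ : a * ρ ≠ 0 := by positivity
  have hy1 : y 1 = 0 := by
    have h : a * ρ * y 1 = 0 := by rw [← hB0, hy0, mul_zero]
    exact (mul_eq_zero.1 h).resolve_left haρ
  have main : ∀ n, y n = 0 ∧ y (n + 1) = 0 := by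
    intro n
    induction n with
    | zero => exact ⟨hy0, hy1⟩
    | succ n ih =>
      obtain ⟨h0, h1⟩ := ih
      refine ⟨h1, ?_⟩
      rcases Nat.lt_or_ge (n + 2) T with h | h
      · have hr := hRec n h
        rw [h1, h0, mul_zero, zero_add] at hr
        exact (mul_eq_zero.1 hr.symm).resolve_left haρ
      · exact hout _ h
  exact fun n => (main n).1

section Derive
variable {T : ℕ} {ρ a s2 g : ℝ}

lemma derive (hT : 2 ≤ T) (hρ0 : 0 < ρ) (hρ1 : ρ < 1) (ha : 0 < a) (hs2 : 0 < s2)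
    (x : Fin T → ℝ)
    (hx : (Lmat T ρ a s2).mulVec x = fun i : Fin T => g * ρ ^ (T - (i : ℕ))) :
    (g = 0 → x = 0) ∧ (0 < g → ∀ i j : Fin T, i < j → x i < x j) := by
  classical
  set y : ℕ → ℝ := (fun n => if h : n < T then x ⟨n, h⟩ else 0) with hy
  have hxy : ∀ i : Fin T, y (i : ℕ) = x i := by
    intro i; simp [hy, i.isLt]
  have hout : ∀ n, T ≤ n → y n = 0 := by
    intro n hn; simp [hy, Nat.not_lt.2 hn]
  set A : ℕ → ℝ := (fun n => ∑ j ∈ Finset.range (n + 1), ρ ^ (n - j) * y j) with hA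
  set S : ℕ → ℝ :=
    (fun n => ∑ j ∈ Finset.range T, ρ ^ (Int.natAbs ((n : ℤ) - (j : ℤ))) * y j) with hS
  -- the row equations
  have hrow : ∀ n, ∀ hn : n < T, a * y n + s2 * S n = g * ρ ^ (T - n) := by
    intro n hn
    have h1 := congrFun hx ⟨n, hn⟩
    simp only [Matrix.mulVec, dotProduct, Lmat, Matrix.of_apply] at h1
    have e1 : ∀ j : Fin T,
        (if (⟨n, hn⟩ : Fin T) = j then a + s2
          else s2 * ρ ^ (Int.natAbs (((⟨n, hn⟩ : Fin T) : ℤ) - (j : ℤ)))) * x j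
        = (if (⟨n, hn⟩ : Fin T) = j then a * x j else 0)
          + s2 * (ρ ^ (Int.natAbs ((n : ℤ) - ((j : ℕ) : ℤ))) * x j) := by
      intro j
      by_cases h : (⟨n, hn⟩ : Fin T) = j
      · subst h; simp; ring
      · simp [h]; ring
    rw [Finset.sum_congr rfl (fun j _ => e1 j), Finset.sum_add_distrib,
      Finset.sum_ite_eq, if_pos (Finset.mem_univ _), ← Finset.mul_sum] at h1
    have e2 : (∑ j : Fin T, ρ ^ (Int.natAbs ((n : ℤ) - ((j : ℕ) : ℤ))) * x j) = S n := by
      simp only [hS]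
      rw [← Fin.sum_univ_eq_sum_range (fun j => ρ ^ (Int.natAbs ((n : ℤ) - (j : ℤ))) * y j) T]
      exact Finset.sum_congr rfl fun j _ => by rw [hxy]
    rw [e2] at h1
    have hyn : y n = x ⟨n, hn⟩ := by simp [hy, hn]
    rw [hyn]
    exact h1
  -- A recurrence
  have hArec : ∀ n, A (n + 1) = y (n + 1) + ρ * A n := by
    intro n
    simp only [hA]
    rw [Finset.sum_range_succ, Nat.sub_self, pow_zero, one_mul]
    have e : ∀ j ∈ Finset.range (n + 1), ρ ^ (n + 1 - j) * y j = ρ * (ρ ^ (n - j) * y j) := by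
      intro j hj
      have hj' : j ≤ n := by simpa [Nat.lt_succ_iff] using hj
      have : n + 1 - j = (n - j) + 1 := by omega
      rw [this, pow_succ]; ring
    rw [Finset.sum_congr rfl e, ← Finset.mul_sum]
    ring
  -- the subtraction identity
  have hSsub : ∀ n, n + 1 < T → S n - ρ * S (n + 1) = (1 - ρ ^ 2) * A n := by
    intro n hn
    have e1 : S n - ρ * S (n + 1) =
        ∑ j ∈ Finset.range T,
          (ρ ^ (Int.natAbs ((n : ℤ) - (j : ℤ)))
            - ρ * ρ ^ (Int.natAbs (((n : ℤ) + 1) - (j : ℤ)))) * y j := by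
      simp only [hS]
      rw [Finset.mul_sum, ← Finset.sum_sub_distrib]
      refine Finset.sum_congr rfl fun j _ => ?_
      have : ((↑(n + 1) : ℤ) - (j : ℤ)) = ((n : ℤ) + 1 - (j : ℤ)) := by push_cast; ring
      rw [this]; ring
    rw [e1]
    rw [← Finset.sum_subset (Finset.range_subset_range.mpr (by omega : n + 1 ≤ T))]
    · simp only [hA]
      rw [Finset.mul_sum]
      refine Finset.sum_congr rfl fun j hj => ?_
      have hj' : j ≤ n := by simpa [Nat.lt_succ_iff] using hj
      have h1 : Int.natAbs ((n : ℤ) - (j : ℤ)) = n - j := by omega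
      have h2 : Int.natAbs ((n : ℤ) + 1 - (j : ℤ)) = (n - j) + 1 := by omega
      rw [h1, h2, pow_succ]; ring
    · intro j hjT hjn
      have hj' : n + 1 ≤ j := by
        simp only [Finset.mem_range, Nat.not_lt] at hjn; exact hjn
      have h1 : Int.natAbs ((n : ℤ) - (j : ℤ)) = (j - (n + 1)) + 1 := by omega
      have h2 : Int.natAbs ((n : ℤ) + 1 - (j : ℤ)) = j - (n + 1) := by omega
      rw [h1, h2, pow_succ]; ring
  -- last-row sum is A (T-1)
  have hSlast : S (T - 1) = A (T - 1) := by
    simp only [hS, hA]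
    have hT1 : T - 1 + 1 = T := by omega
    rw [hT1]
    refine Finset.sum_congr rfl fun j hj => ?_
    have hj' : j < T := Finset.mem_range.1 hj
    have h1 : Int.natAbs (((T - 1 : ℕ) : ℤ) - (j : ℤ)) = T - 1 - j := by omega
    rw [h1]
  -- relation R1
  have hR1 : ∀ n, n + 1 < T →
      a * (y n - ρ * y (n + 1)) + s2 * (1 - ρ ^ 2) * A n = 0 := by
    intro n hn
    have h0 := hrow n (by omega)
    have h1 := hrow (n + 1) hn
    have hpow : ρ ^ (T - n) = ρ ^ (T - (n + 1)) * ρ := by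
      have : T - n = (T - (n + 1)) + 1 := by omega
      rw [this, pow_succ]
    linear_combination h0 - ρ * h1 - s2 * hSsub n hn + g * hpow
  -- boundary condition
  have hA0 : A 0 = y 0 := by simp [hA]
  have hB0 : (a + s2 * (1 - ρ ^ 2)) * y 0 = a * ρ * y 1 := by
    have h := hR1 0 (by omega)
    linear_combination h - s2 * (1 - ρ ^ 2) * hA0
  -- three-term recurrence
  have hRec : ∀ n, n + 2 < T →
      (a * (1 + ρ ^ 2) + s2 * (1 - ρ ^ 2)) * y (n + 1)
        = a * ρ * (y n + y (n + 2)) := by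
    intro n hn
    have e1 := hR1 (n + 1) hn
    have e0 := hR1 n (by omega)
    linear_combination e1 - ρ * e0 - s2 * (1 - ρ ^ 2) * hArec n
  -- last row
  have hlast : a * y (T - 1) + s2 * A (T - 1) = g * ρ := by
    have h := hrow (T - 1) (by omega)
    have h2 : T - (T - 1) = 1 := by omega
    rw [h2, pow_one, hSlast] at h
    exact h
  -- conclusions
  set c := s2 * (1 - ρ ^ 2) with hcdef
  have hc : 0 < c := by
    have : 0 < 1 - ρ ^ 2 := by nlinarith
    positivity
  have hB0' : (a + c) * y 0 = a * ρ * y 1 := hB0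
  have hRec' : ∀ n, n + 2 < T →
      (a * (1 + ρ ^ 2) + c) * y (n + 1) = a * ρ * (y n + y (n + 2)) := hRec
  have hT1 : T - 1 + 1 = T := by omega
  rcases lt_trichotomy (y 0) 0 with hneg | hzero | hpos
  · -- y 0 < 0 : contradiction in both claims
    set z : ℕ → ℝ := fun n => -y n with hz
    have hB0z : (a + c) * z 0 = a * ρ * z 1 := by
      simp only [hz]; linarith [hB0']
    have hRecz : ∀ n, n + 2 < T →
        (a * (1 + ρ ^ 2) + c) * z (n + 1) = a * ρ * (z n + z (n + 2)) := by
      intro n hn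
      have := hRec' n hn
      simp only [hz]; linarith
    have hz0 : 0 < z 0 := by simp only [hz]; linarith
    have hposz := core_pos T ρ a c hρ0 hρ1 ha hc z hB0z hRecz hz0
    have hAneg : A (T - 1) < 0 := by
      have h1 : 0 < ∑ j ∈ Finset.range T, ρ ^ (T - 1 - j) * z j := by
        apply Finset.sum_pos
        · intro j hj
          exact mul_pos (pow_pos hρ0 _) (hposz j (Finset.mem_range.1 hj))
        · exact ⟨0, Finset.mem_range.2 (by omega)⟩
      have h2 : A (T - 1) = -∑ j ∈ Finset.range T, ρ ^ (T - 1 - j) * z j := by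
        simp only [hA, hT1, hz]
        rw [← Finset.sum_neg_distrib]
        exact Finset.sum_congr rfl fun j _ => by ring
      rw [h2]; linarith
    have hylneg : y (T - 1) < 0 := by
      have := hposz (T - 1) (by omega)
      simp only [hz] at this; linarith
    constructor
    · intro hg0
      exfalso
      rw [hg0, zero_mul] at hlast
      nlinarith [mul_neg_of_pos_of_neg ha hylneg, mul_neg_of_pos_of_neg hs2 hAneg]
    · intro hgpos _ _ _
      exfalso
      nlinarith [mul_pos hgpos hρ0, mul_neg_of_pos_of_neg ha hylneg,
        mul_neg_of_pos_of_neg hs2 hAneg]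
  · -- y 0 = 0 : everything vanishes, g = 0
    have hall := core_zero T ρ a c hρ0 ha y hB0' hRec' hout hzero
    have hAz : A (T - 1) = 0 := by
      simp only [hA]
      exact Finset.sum_eq_zero fun j _ => by rw [hall j, mul_zero]
    rw [hall (T - 1), hAz, mul_zero, mul_zero, add_zero] at hlast
    constructor
    · intro _
      funext i
      rw [Pi.zero_apply, ← hxy i]
      exact hall i
    · intro hgpos
      exfalso
      nlinarith [mul_pos hgpos hρ0]
  · -- y 0 > 0 : strictly increasing
    have hmono := core_mono T ρ a c hρ0 hρ1 ha hc y hB0' hRec' hpos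
    have hposy := core_pos T ρ a c hρ0 hρ1 ha hc y hB0' hRec' hpos
    have hApos : 0 < A (T - 1) := by
      simp only [hA, hT1]
      apply Finset.sum_pos
      · intro j hj
        exact mul_pos (pow_pos hρ0 _) (hposy j (Finset.mem_range.1 hj))
      · exact ⟨0, Finset.mem_range.2 (by omega)⟩
    have hylpos : 0 < y (T - 1) := hposy _ (by omega)
    constructor
    · intro hg0
      exfalso
      rw [hg0, zero_mul] at hlast
      nlinarith [mul_pos ha hylpos, mul_pos hs2 hApos]
    · intro _ i j hij
      rw [← hxy i, ← hxy j]
      exact core_chain T y (fun n hn => (hmono n hn).2) i j hij j.isLt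

end Derive

/-- ordering of standardized credibility factors in the dynamic
gamma-gamma model with arbitrary means.  Here `q_t = ψ(1+σ²)λ_t²`,
`c_t = σ²λ_tλ_{T+1}ρ^{T+1−t}`; the covariance matrix is invertible and the
standardized credibility factors `α̂*_t = λ_t·(Σ_T⁻¹c)_t` satisfy
`α̂*_1 ≤ … ≤ α̂*_T`, with strict inequalities when `ρ ∈ (0,1)`. -/
theorem stmt13 (T : ℕ) (hT : 2 ≤ T) (ρ : ℝ) (hρ1 : 0 ≤ ρ) (hρ2 : ρ < 1)
    (σ ψ : ℝ) (hσ : 0 < σ) (hψ : 0 < ψ) (lam : ℕ → ℝ)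
    (hlam : ∀ t, 1 ≤ t → t ≤ T + 1 → 0 < lam t) :
    IsUnit (covMat T ρ σ lam (fun t => ψ * (1 + σ ^ 2) * (lam t) ^ 2)) ∧
    (∀ s t : Fin T, s ≤ t →
      lam ((s : ℕ) + 1) *
          (covMat T ρ σ lam (fun t => ψ * (1 + σ ^ 2) * (lam t) ^ 2))⁻¹.mulVec
            (fun i : Fin T =>
              σ ^ 2 * lam ((i : ℕ) + 1) * lam (T + 1) * ρ ^ (T - (i : ℕ))) s ≤
        lam ((t : ℕ) + 1) *
          (covMat T ρ σ lam (fun t => ψ * (1 + σ ^ 2) * (lam t) ^ 2))⁻¹.mulVec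
            (fun i : Fin T =>
              σ ^ 2 * lam ((i : ℕ) + 1) * lam (T + 1) * ρ ^ (T - (i : ℕ))) t) ∧
    (0 < ρ → ∀ s t : Fin T, s < t →
      lam ((s : ℕ) + 1) *
          (covMat T ρ σ lam (fun t => ψ * (1 + σ ^ 2) * (lam t) ^ 2))⁻¹.mulVec
            (fun i : Fin T =>
              σ ^ 2 * lam ((i : ℕ) + 1) * lam (T + 1) * ρ ^ (T - (i : ℕ))) s <
        lam ((t : ℕ) + 1) *
          (covMat T ρ σ lam (fun t => ψ * (1 + σ ^ 2) * (lam t) ^ 2))⁻¹.mulVec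
            (fun i : Fin T =>
              σ ^ 2 * lam ((i : ℕ) + 1) * lam (T + 1) * ρ ^ (T - (i : ℕ))) t) := by
  classical
  set C := covMat T ρ σ lam (fun t => ψ * (1 + σ ^ 2) * (lam t) ^ 2) with hC
  set cvec : Fin T → ℝ := fun i : Fin T =>
    σ ^ 2 * lam ((i : ℕ) + 1) * lam (T + 1) * ρ ^ (T - (i : ℕ)) with hcvec
  have hlampos : ∀ i : Fin T, 0 < lam ((i : ℕ) + 1) :=
    fun i => hlam _ (by omega) (by have := i.isLt; omega)
  rcases eq_or_lt_of_le hρ1 with hρ0 | hρpos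
  · -- ρ = 0
    have hρ0' : ρ = 0 := hρ0.symm
    subst hρ0'
    have hdiag : C = Matrix.diagonal (fun i : Fin T =>
        ψ * (1 + σ ^ 2) * (lam ((i : ℕ) + 1)) ^ 2 + σ ^ 2 * (lam ((i : ℕ) + 1)) ^ 2) := by
      ext i j
      by_cases hij : i = j
      · subst hij
        simp [hC, covMat, Matrix.diagonal]
      · have hne : ((i : ℕ) : ℤ) - ((j : ℕ) : ℤ) ≠ 0 := by
          have : (i : ℕ) ≠ (j : ℕ) := fun hh => hij (Fin.ext hh)
          omega
        have hne' : Int.natAbs (((i : ℕ) : ℤ) - ((j : ℕ) : ℤ)) ≠ 0 :=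
          Int.natAbs_ne_zero.2 hne
        simp [hC, covMat, Matrix.diagonal, hij, zero_pow hne']
    have hunit : IsUnit C := by
      rw [hdiag, Matrix.isUnit_iff_isUnit_det, Matrix.det_diagonal, isUnit_iff_ne_zero]
      refine Finset.prod_ne_zero_iff.2 fun i _ => ?_
      have := hlampos i
      positivity
    have hc0 : cvec = 0 := by
      funext i
      have hTi : T - (i : ℕ) ≠ 0 := by have := i.isLt; omega
      simp [hcvec, zero_pow hTi]
    refine ⟨hunit, ?_, ?_⟩
    · intro s t _
      rw [hc0, Matrix.mulVec_zero]
      simp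
    · intro hcontra
      exact absurd hcontra (lt_irrefl 0)
  · -- 0 < ρ
    have hs2 : (0:ℝ) < σ ^ 2 := by positivity
    have ha : (0:ℝ) < ψ * (1 + σ ^ 2) := by positivity
    set D := Matrix.diagonal (fun i : Fin T => lam ((i : ℕ) + 1)) with hD
    have hfact : C = D * Lmat T ρ (ψ * (1 + σ ^ 2)) (σ ^ 2) * D := by
      ext i j
      have he : (D * Lmat T ρ (ψ * (1 + σ ^ 2)) (σ ^ 2) * D) i j =
          lam ((i : ℕ) + 1) * (Lmat T ρ (ψ * (1 + σ ^ 2)) (σ ^ 2)) i j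
            * lam ((j : ℕ) + 1) := by
        rw [hD, Matrix.mul_diagonal, Matrix.diagonal_mul]
      rw [he]
      by_cases hij : i = j
      · subst hij
        have h2 : C i i = ψ * (1 + σ ^ 2) * (lam ((i : ℕ) + 1)) ^ 2
            + σ ^ 2 * (lam ((i : ℕ) + 1)) ^ 2 := by
          simp [hC, covMat]
        have h3 : (Lmat T ρ (ψ * (1 + σ ^ 2)) (σ ^ 2)) i i = ψ * (1 + σ ^ 2) + σ ^ 2 := by
          simp [Lmat]
        rw [h2, h3]
        ring
      · have h2 : C i j = σ ^ 2 * lam ((i : ℕ) + 1) * lam ((j : ℕ) + 1)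
            * ρ ^ (Int.natAbs (((i : ℕ) : ℤ) - ((j : ℕ) : ℤ))) := by
          simp [hC, covMat, hij]
        have h3 : (Lmat T ρ (ψ * (1 + σ ^ 2)) (σ ^ 2)) i j
            = σ ^ 2 * ρ ^ (Int.natAbs (((i : ℕ) : ℤ) - ((j : ℕ) : ℤ))) := by
          simp [Lmat, hij]
        rw [h2, h3]
        ring
    have hLunit : IsUnit (Lmat T ρ (ψ * (1 + σ ^ 2)) (σ ^ 2)) := by
      refine Matrix.mulVec_injective_iff_isUnit.1 fun u v huv => ?_
      have hsub : (Lmat T ρ (ψ * (1 + σ ^ 2)) (σ ^ 2)).mulVec (u - v) =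
          fun i : Fin T => (0:ℝ) * ρ ^ (T - (i : ℕ)) := by
        funext i
        simp [Matrix.mulVec_sub, huv]
      have := (derive hT hρpos hρ2 ha hs2 (u - v) hsub).1 rfl
      exact sub_eq_zero.1 this
    have hDunit : IsUnit D := by
      rw [hD, Matrix.isUnit_iff_isUnit_det, Matrix.det_diagonal, isUnit_iff_ne_zero]
      exact Finset.prod_ne_zero_iff.2 fun i _ => (hlampos i).ne'
    have hCunit : IsUnit C := by
      rw [hfact]
      exact (hDunit.mul hLunit).mul hDunit
    set u : Fin T → ℝ := C⁻¹.mulVec cvec with hu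
    have hcu : C.mulVec u = cvec := by
      rw [hu, Matrix.mulVec_mulVec,
        Matrix.mul_nonsing_inv _ ((Matrix.isUnit_iff_isUnit_det C).1 hCunit),
        Matrix.one_mulVec]
    set xv : Fin T → ℝ := fun i => lam ((i : ℕ) + 1) * u i with hxv
    have hLx : (Lmat T ρ (ψ * (1 + σ ^ 2)) (σ ^ 2)).mulVec xv =
        fun i : Fin T => (σ ^ 2 * lam (T + 1)) * ρ ^ (T - (i : ℕ)) := by
      funext i
      have h1 : (C.mulVec u) i = cvec i := congrFun hcu i
      rw [hfact, ← Matrix.mulVec_mulVec, ← Matrix.mulVec_mulVec] at h1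
      have hDu : D.mulVec u = xv := by
        funext k
        rw [hD, Matrix.mulVec_diagonal, hxv]
      rw [hDu, hD, Matrix.mulVec_diagonal] at h1
      have h2 : cvec i = lam ((i : ℕ) + 1) * ((σ ^ 2 * lam (T + 1)) * ρ ^ (T - (i : ℕ))) := by
        rw [hcvec]; ring
      rw [h2] at h1
      exact mul_left_cancel₀ (hlampos i).ne' h1
    have hg : 0 < σ ^ 2 * lam (T + 1) :=
      mul_pos hs2 (hlam (T + 1) (by omega) le_rfl)
    have hder := (derive hT hρpos hρ2 ha hs2 xv hLx).2 hg
    refine ⟨hCunit, ?_, ?_⟩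
    · intro s t hst
      rcases eq_or_lt_of_le hst with heq | hlt
      · rw [heq]
      · have h := hder s t hlt
        simp only [hxv] at h
        exact h.le
    · intro _ s t hlt
      have h := hder s t hlt
      simp only [hxv] at h
      exact h
end

section
/- (Beta-gamma thinning identity underlying the BGAR(1) process.) Let a, b, r > 0 be real numbers, and let B and R be independent real-valued random variables on a probability space such that B has the beta distribution with parameters a and b, and R has the gamma distribution with shape parameter a + b and rate parameter r. Then the product B·R has the gamma distribution with shape parameter a and rate parameter r. -/
open MeasureTheory ProbabilityTheory

/-- The density of the beta distribution with parameters `a`, `b` on `(0,1)`: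
`x^{a−1}(1−x)^{b−1}/B(a,b)` where `B(a,b) = Γ(a)Γ(b)/Γ(a+b)`. -/
noncomputable def betaPDFReal (a b x : ℝ) : ℝ :=
  if 0 < x ∧ x < 1 then
    (Real.Gamma (a + b) / (Real.Gamma a * Real.Gamma b)) *
      x ^ (a - 1) * (1 - x) ^ (b - 1)
  else 0

/-- The beta distribution measure with parameters `a`, `b`. -/
noncomputable def betaMeasure (a b : ℝ) : Measure ℝ :=
  MeasureTheory.volume.withDensity fun x => ENNReal.ofReal (_root_.betaPDFReal a b x)

/-! Conditionally on `B = x`, the product `x R` has law `Gamma(a + b, r / x)`, so `B R` has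
density `t ↦ ∫ β_{a,b}(x) γ_{a+b, r/x}(t) dx`. For `t > 0` the substitution
`x = t / (t + v)`, `v > 0`, turns the integrand into `γ_{a,r}(t) γ_{b,r}(v)`: this is the
classical change of variables `(X, Y) ↦ (X / (X + Y), X + Y)` relating two independent gamma
variables to a beta and a gamma one. Integrating out `v` leaves `γ_{a,r}(t)`. -/

open Set Real
open scoped ENNReal

lemma betaPDFReal_eq_betaPDFReal (a b : ℝ) :
    _root_.betaPDFReal a b = ProbabilityTheory.betaPDFReal a b := by
  funext x
  simp only [_root_.betaPDFReal, ProbabilityTheory.betaPDFReal, beta, one_div_div]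

lemma betaMeasure_eq_betaMeasure (a b : ℝ) :
    _root_.betaMeasure a b = ProbabilityTheory.betaMeasure a b := by
  rw [_root_.betaMeasure, betaPDFReal_eq_betaPDFReal]
  rfl

lemma MeasureTheory.Measure.mconv_apply {M : Type*} [Monoid M] [MeasurableSpace M]
    [MeasurableMul₂ M] (μ ν : Measure M) [SFinite ν] {s : Set M} (hs : MeasurableSet s) :
    (μ ∗ₘ ν) s = ∫⁻ x, ν ((x * ·) ⁻¹' s) ∂μ := by
  rw [Measure.mconv, Measure.map_apply measurable_mul hs, Measure.prod_apply (measurable_mul hs)]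
  rfl

lemma inv_mul_gammaPDFReal_div (k : ℝ) {r x : ℝ} (hr : 0 ≤ r) (hx : 0 < x) (t : ℝ) :
    x⁻¹ * gammaPDFReal k r (t / x) = gammaPDFReal k (r / x) t := by
  by_cases ht : 0 ≤ t
  · have hxk : x ^ k = x ^ (k - 1) * x := by
      rw [← rpow_add_one hx.ne', sub_add_cancel]
    rw [gammaPDFReal, gammaPDFReal, if_pos (div_nonneg ht hx.le), if_pos ht,
      div_rpow ht hx.le, div_rpow hr hx.le, hxk]
    have : x ^ (k - 1) ≠ 0 := (rpow_pos_of_pos hx _).ne'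
    field_simp
  · rw [gammaPDFReal, gammaPDFReal, if_neg (by rwa [le_div_iff₀ hx, zero_mul]), if_neg ht,
      mul_zero]

lemma map_const_mul_gammaMeasure (k : ℝ) {r x : ℝ} (hr : 0 ≤ r) (hx : 0 < x) :
    (gammaMeasure k r).map (x * ·) = gammaMeasure k (r / x) := by
  ext s hs
  have himage : (· / x) '' s = (x * ·) ⁻¹' s := congrFun
    (image_eq_preimage_of_inverse (fun t => mul_div_cancel₀ t hx.ne')
      (fun y => mul_div_cancel_left₀ y hx.ne')) s
  have hderiv : ∀ t ∈ s, HasDerivWithinAt (· / x) x⁻¹ s t := fun t _ => by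
    simpa using ((hasDerivAt_id t).div_const x).hasDerivWithinAt
  rw [Measure.map_apply (measurable_const_mul x) hs, gammaMeasure, gammaMeasure,
    withDensity_apply _ (measurable_const_mul x hs), withDensity_apply _ hs, ← himage,
    lintegral_image_eq_lintegral_abs_deriv_mul hs hderiv
      (fun p _ q _ h => (div_left_inj' hx.ne').mp h)]
  refine lintegral_congr fun t => ?_
  rw [abs_of_pos (inv_pos.mpr hx), gammaPDF, gammaPDF, ← ENNReal.ofReal_mul (by positivity),
    inv_mul_gammaPDFReal_div k hr hx]

lemma setLIntegral_Ioi_gammaPDF {a r : ℝ} (ha : 0 < a) (hr : 0 < r) :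
    ∫⁻ v in Ioi 0, gammaPDF a r v = 1 := by
  rw [setLIntegral_congr Ioi_ae_eq_Ici, setLIntegral_eq_of_support_subset,
    lintegral_gammaPDF_eq_one ha hr]
  exact fun v hv => not_lt.1 fun h => hv (gammaPDF_of_neg h)

namespace ProbabilityTheory

lemma gammaPDFReal_mul_gammaPDFReal_eq {a b r t v : ℝ} (ha : 0 < a) (hb : 0 < b)
    (hr : 0 < r) (ht : 0 < t) (hv : 0 < v) :
    gammaPDFReal a r t * gammaPDFReal b r v =
      t / (t + v) ^ 2 *
        (betaPDFReal a b (t / (t + v)) * gammaPDFReal (a + b) (r / (t / (t + v))) t) := by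
  have hT : 0 < t + v := by linarith
  have hx1 : t / (t + v) < 1 := by rw [div_lt_one hT]; linarith
  rw [betaPDFReal, if_pos ⟨by positivity, hx1⟩, gammaPDFReal, gammaPDFReal, gammaPDFReal,
    if_pos ht.le, if_pos ht.le, if_pos hv.le, beta]
  have h1mx : 1 - t / (t + v) = v / (t + v) := by field_simp; ring
  have hrate : r / (t / (t + v)) = r * (t + v) / t := by field_simp
  have e1 : (t / (t + v)) ^ (a - 1) = t ^ (a - 1) / (t + v) ^ (a - 1) :=
    div_rpow ht.le hT.le _
  have e2 : (v / (t + v)) ^ (b - 1) = v ^ (b - 1) / (t + v) ^ (b - 1) :=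
    div_rpow hv.le hT.le _
  have e3 : (r * (t + v) / t) ^ (a + b) = r ^ a * r ^ b * (t + v) ^ (a + b) / t ^ (a + b) := by
    rw [div_rpow (by positivity) ht.le, mul_rpow hr.le hT.le, ← rpow_add hr]
  have e4 : (t + v) ^ (a + b) = (t + v) ^ (a - 1) * (t + v) ^ (b - 1) * (t + v) ^ 2 := by
    rw [show a + b = (a - 1) + (b - 1) + 1 + 1 by ring, rpow_add_one hT.ne',
      rpow_add_one hT.ne', rpow_add hT]
    ring
  have e5 : t ^ (a + b) = t ^ (a + b - 1) * t := by
    rw [← rpow_add_one ht.ne', sub_add_cancel]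
  have e6 : exp (-(r * (t + v) / t * t)) = exp (-(r * t)) * exp (-(r * v)) := by
    rw [← exp_add]
    congr 1
    field_simp
    ring
  rw [h1mx, hrate, e1, e2, e3, e4, e5, e6]
  have := Gamma_pos_of_pos ha
  have := Gamma_pos_of_pos hb
  have := Gamma_pos_of_pos (add_pos ha hb)
  have : (t + v) ^ (a - 1) ≠ 0 := (rpow_pos_of_pos hT _).ne'
  have : (t + v) ^ (b - 1) ≠ 0 := (rpow_pos_of_pos hT _).ne'
  have : t ^ (a + b - 1) ≠ 0 := (rpow_pos_of_pos ht _).ne'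
  field_simp

lemma support_betaPDF_subset (a b : ℝ) : Function.support (betaPDF a b) ⊆ Ioo 0 1 :=
  fun _ hx => ⟨not_le.1 fun h => hx (betaPDF_eq_zero_of_nonpos h),
    not_le.1 fun h => hx (betaPDF_eq_zero_of_one_le h)⟩

lemma image_div_add_Ioi {t : ℝ} (ht : 0 < t) : (fun v => t / (t + v)) '' Ioi 0 = Ioo 0 1 := by
  ext x
  constructor
  · rintro ⟨v, hv : 0 < v, rfl⟩
    exact ⟨by positivity, (div_lt_one (by positivity)).2 (by linarith)⟩
  · rintro ⟨hx0, hx1⟩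
    have htx : t < t / x := by rw [lt_div_iff₀ hx0]; nlinarith
    refine ⟨t / x - t, sub_pos.2 htx, ?_⟩
    simp only [add_sub_cancel]
    field_simp

lemma lintegral_betaPDF_mul_gammaPDF_div {a b r t : ℝ} (ha : 0 < a) (hb : 0 < b) (hr : 0 < r)
    (ht : 0 < t) :
    ∫⁻ x, betaPDF a b x * gammaPDF (a + b) (r / x) t = gammaPDF a r t := by
  set f : ℝ → ℝ := fun v => t / (t + v)
  have hpos : ∀ v ∈ Ioi (0 : ℝ), 0 < t + v := fun v (hv : 0 < v) => by linarith
  have himage : f '' Ioi 0 = Ioo 0 1 := image_div_add_Ioi ht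
  have hderiv : ∀ v ∈ Ioi 0, HasDerivWithinAt f (-(t / (t + v) ^ 2)) (Ioi 0) v := by
    intro v hv
    have h := (hasDerivAt_const v t).fun_div ((hasDerivAt_id' v).const_add t) (hpos v hv).ne'
    exact (h.congr_deriv (by ring)).hasDerivWithinAt
  have hinj : InjOn f (Ioi 0) := by
    intro p hp q hq hpq
    rw [div_eq_div_iff (hpos p hp).ne' (hpos q hq).ne'] at hpq
    nlinarith
  calc ∫⁻ x, betaPDF a b x * gammaPDF (a + b) (r / x) t
      = ∫⁻ x in f '' Ioi 0, betaPDF a b x * gammaPDF (a + b) (r / x) t := by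
        rw [himage, setLIntegral_eq_of_support_subset
          ((Function.support_mul_subset_left _ _).trans (support_betaPDF_subset a b))]
    _ = ∫⁻ v in Ioi 0, gammaPDF a r t * gammaPDF b r v := by
        rw [lintegral_image_eq_lintegral_abs_deriv_mul measurableSet_Ioi hderiv hinj]
        refine setLIntegral_congr_fun measurableSet_Ioi fun v hv => ?_
        have hx : f v ∈ Ioo 0 1 := himage ▸ mem_image_of_mem f hv
        rw [abs_neg, abs_of_pos (div_pos ht (pow_pos (hpos v hv) 2)), betaPDF, gammaPDF,
          gammaPDF, gammaPDF, ← ENNReal.ofReal_mul (betaPDFReal_pos hx.1 hx.2 ha hb).le,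
          ← ENNReal.ofReal_mul (by positivity),
          ← ENNReal.ofReal_mul (gammaPDFReal_nonneg ha hr t),
          gammaPDFReal_mul_gammaPDFReal_eq ha hb hr ht hv]
    _ = gammaPDF a r t := by
        rw [lintegral_const_mul _ (f := gammaPDF b r) (measurable_gammaPDFReal b r).ennreal_ofReal,
          setLIntegral_Ioi_gammaPDF hb hr, mul_one]

lemma lintegral_betaPDF_mul_gammaPDF_div_ae_eq {a b r : ℝ} (ha : 0 < a) (hb : 0 < b)
    (hr : 0 < r) :
    (fun t => ∫⁻ x, betaPDF a b x * gammaPDF (a + b) (r / x) t) =ᵐ[volume] gammaPDF a r := by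
  -- at `t = 0` the two sides can differ (e.g. when `a + b = 1`, through `0 ^ 0 = 1`)
  filter_upwards [measure_eq_zero_iff_ae_notMem.1 (measure_singleton (0 : ℝ))] with t ht
  rcases lt_or_gt_of_ne (ht : t ≠ 0) with htneg | htpos
  · simp only [gammaPDF_of_neg htneg, mul_zero, lintegral_zero]
  · exact lintegral_betaPDF_mul_gammaPDF_div ha hb hr htpos

lemma measurable_betaPDF_mul_gammaPDF_div (a b r : ℝ) :
    Measurable (Function.uncurry fun x t => betaPDF a b x * gammaPDF (a + b) (r / x) t) := by
  simp only [Function.uncurry_def, betaPDF, gammaPDF_eq]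
  exact Measurable.mul (by fun_prop) <| Measurable.ennreal_ofReal <|
    Measurable.ite (measurableSet_le measurable_const measurable_snd) (by fun_prop)
      measurable_const

theorem betaMeasure_mconv_gammaMeasure {a b r : ℝ} (ha : 0 < a) (hb : 0 < b) (hr : 0 < r) :
    betaMeasure a b ∗ₘ gammaMeasure (a + b) r = gammaMeasure a r := by
  have := isProbabilityMeasure_gammaMeasure (add_pos ha hb) hr
  ext s hs
  have hscale (x : ℝ) : betaPDF a b x * gammaMeasure (a + b) r ((x * ·) ⁻¹' s) =
      ∫⁻ t in s, betaPDF a b x * gammaPDF (a + b) (r / x) t := by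
    rcases le_or_gt x 0 with hx | hx
    · simp only [betaPDF_eq_zero_of_nonpos hx, zero_mul, lintegral_zero]
    · rw [← Measure.map_apply (measurable_const_mul x) hs, map_const_mul_gammaMeasure _ hr.le hx,
        gammaMeasure, withDensity_apply _ hs,
        lintegral_const_mul _ (f := gammaPDF _ _) (measurable_gammaPDFReal _ _).ennreal_ofReal]
  calc (betaMeasure a b ∗ₘ gammaMeasure (a + b) r) s
      = ∫⁻ x, gammaMeasure (a + b) r ((x * ·) ⁻¹' s) ∂betaMeasure a b :=
        Measure.mconv_apply _ _ hs
    _ = ∫⁻ x, ∫⁻ t in s, betaPDF a b x * gammaPDF (a + b) (r / x) t := by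
        rw [betaMeasure, lintegral_withDensity_eq_lintegral_mul_non_measurable _
          (f := betaPDF a b) (measurable_betaPDFReal a b).ennreal_ofReal
          (ae_of_all _ fun _ => ENNReal.ofReal_lt_top)]
        exact lintegral_congr hscale
    _ = ∫⁻ t in s, ∫⁻ x, betaPDF a b x * gammaPDF (a + b) (r / x) t :=
        lintegral_lintegral_swap (measurable_betaPDF_mul_gammaPDF_div a b r).aemeasurable
    _ = gammaMeasure a r s := by
        rw [gammaMeasure, withDensity_apply _ hs]
        exact lintegral_congr_ae
          (ae_restrict_of_ae (lintegral_betaPDF_mul_gammaPDF_div_ae_eq ha hb hr))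

end ProbabilityTheory

/-- beta-gamma thinning identity underlying the BGAR(1) process.
If `B ∼ Beta(a,b)` and `R ∼ Gamma(a+b, r)` are independent, then
`B·R ∼ Gamma(a, r)`. -/
theorem stmt18 {Ω : Type*} {mΩ : MeasurableSpace Ω} (P : Measure Ω)
    [IsProbabilityMeasure P] (a b r : ℝ) (ha : 0 < a) (hb : 0 < b) (hr : 0 < r)
    (B R : Ω → ℝ) (hB : Measurable B) (hR : Measurable R)
    (hindep : IndepFun B R P)
    (hBlaw : P.map B = _root_.betaMeasure a b)
    (hRlaw : P.map R = gammaMeasure (a + b) r) :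
    P.map (fun ω => B ω * R ω) = gammaMeasure a r := by
  rw [← betaMeasure_mconv_gammaMeasure ha hb hr, ← betaMeasure_eq_betaMeasure, ← hBlaw,
    ← hRlaw]
  exact hindep.map_mul_eq_map_mconv_map hB hR
end
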